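/- arXiv:2103.04177 — 7 statements merged into one kernel-verified Lean document; each statement's English description precedes it below -/
import Mathlib

section
/- Define R : (−1, ∞) → ℝ by R(x) := 2(log(1+x) − x + x²/2)/x² for x ≠ 0 and R(0) := 0 (so that log(1+x) = x − x²/2 + (x²/2)R(x)). Then: (a) R is monotone increasing on (−1, ∞); (b) R(x) < 1 for every x > −1; (c) for every x with −1 < x ≤ −1/5 one has 0 < −R(x) < −2 log(1+x); and (d) R(x)/x → 2/3 as x → 0. -/
open Real Filter

/-- The second-order Taylor remainder of `log (1+x)`:
`log (1+x) = x - x²/2 + (x²/2) * R x`. -/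
noncomputable def taylorRemainderLog (x : ℝ) : ℝ :=
  if x = 0 then 0 else 2 * (Real.log (1 + x) - x + x ^ 2 / 2) / x ^ 2

/-!
With `F x = log (1 + x) - x + x ^ 2 / 2` we have `F 0 = 0`, `F' x = x ^ 2 / (1 + x)` and
`R = 2 F / x ^ 2`. Every sign claim is the sign of an auxiliary function that vanishes at `0` and
whose derivative is positive away from `0`: `R' = 2 q / x ^ 3` with `q = x ^ 3 / (1 + x) - 2 F`,
`q' = x ^ 2 / (1 + x) ^ 2`, gives monotonicity, and `x ^ 2 log (1 + x) - F`, with derivative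
`2 x log (1 + x)`, gives `2 log (1 + x) < R x` for `x < 0`. The limit of `R x / x` is the cubic
Taylor estimate `|F x - x ^ 3 / 3| ≤ |x| ^ 4 / (1 - |x|)`.
-/

open Set Topology

theorem strictMonoOn_Ioi_of_hasDerivAt_pos_of_ne {f f' : ℝ → ℝ} {a c : ℝ} (hac : a < c)
    (hfc : ContinuousAt f c) (hf : ∀ x ∈ Ioi a, x ≠ c → HasDerivAt f (f' x) x)
    (hf' : ∀ x ∈ Ioi a, x ≠ c → 0 < f' x) : StrictMonoOn f (Ioi a) := by
  have hcont : ContinuousOn f (Ioi a) := fun x hx =>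
    if hxc : x = c then hxc ▸ hfc.continuousWithinAt
    else (hf x hx hxc).continuousAt.continuousWithinAt
  have left : StrictMonoOn f (Ioc a c) := by
    refine strictMonoOn_of_hasDerivWithinAt_pos (convex_Ioc a c)
      (hcont.mono Ioc_subset_Ioi_self) (f' := f') ?_ ?_ <;> rw [interior_Ioc]
    · exact fun x hx => (hf x hx.1 hx.2.ne).hasDerivWithinAt
    · exact fun x hx => hf' x hx.1 hx.2.ne
  have right : StrictMonoOn f (Ici c) := by
    refine strictMonoOn_of_hasDerivWithinAt_pos (convex_Ici c)
      (hcont.mono (Ici_subset_Ioi.2 hac)) (f' := f') ?_ ?_ <;> rw [interior_Ici]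
    · exact fun x hx => (hf x (hac.trans hx) hx.ne').hasDerivWithinAt
    · exact fun x hx => hf' x (hac.trans hx) hx.ne'
  simpa only [Ioc_union_Ici_eq_Ioi hac] using left.union right (isGreatest_Ioc hac) isLeast_Ici

noncomputable def logTaylorError (x : ℝ) : ℝ := log (1 + x) - x + x ^ 2 / 2

@[simp]
theorem logTaylorError_zero : logTaylorError 0 = 0 := by simp [logTaylorError]

@[simp]
theorem taylorRemainderLog_zero : taylorRemainderLog 0 = 0 := by simp [taylorRemainderLog]

theorem taylorRemainderLog_eq {x : ℝ} (hx : x ≠ 0) :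
    taylorRemainderLog x = 2 * logTaylorError x / x ^ 2 := by
  simp [taylorRemainderLog, logTaylorError, hx]

theorem hasDerivAt_log_one_add {x : ℝ} (hx : 1 + x ≠ 0) :
    HasDerivAt (fun y => log (1 + y)) (1 / (1 + x)) x := by
  simpa using ((hasDerivAt_id x).const_add 1).log hx

theorem hasDerivAt_logTaylorError {x : ℝ} (hx : 1 + x ≠ 0) :
    HasDerivAt logTaylorError (x ^ 2 / (1 + x)) x := by
  refine HasDerivAt.congr_deriv (f := logTaylorError)
    (((hasDerivAt_log_one_add hx).sub (hasDerivAt_id x)).add ((hasDerivAt_pow 2 x).div_const 2)) ?_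
  field_simp
  ring

theorem abs_logTaylorError_sub_cube_le {x : ℝ} (hx : |x| < 1) :
    |logTaylorError x - x ^ 3 / 3| ≤ |x| ^ 4 / (1 - |x|) := by
  have := abs_log_sub_add_sum_range_le (x := -x) (by rwa [abs_neg]) 3
  simp only [Finset.sum_range_succ, Finset.sum_range_zero, abs_neg, sub_neg_eq_add] at this
  convert this using 2
  simp only [logTaylorError]
  push_cast
  ring

theorem tendsto_taylorRemainderLog_div :
    Tendsto (fun x => taylorRemainderLog x / x) (𝓝[≠] 0) (𝓝 (2 / 3)) := by
  have hbound : ∀ᶠ x in 𝓝[≠] 0,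
      ‖taylorRemainderLog x / x - 2 / 3‖ ≤ 2 * |x| / (1 - |x|) := by
    have hsmall : ∀ᶠ x : ℝ in 𝓝[≠] 0, |x| < 1 :=
      nhdsWithin_le_nhds <| (continuous_abs.tendsto 0).eventually (eventually_lt_nhds (by simp))
    filter_upwards [hsmall, self_mem_nhdsWithin] with x hx (hx0 : x ≠ 0)
    have hx3 : 0 < |x| ^ 3 := by positivity
    have hid : taylorRemainderLog x / x - 2 / 3 = 2 * (logTaylorError x - x ^ 3 / 3) / x ^ 3 := by
      rw [taylorRemainderLog_eq hx0]
      field_simp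
    rw [hid, norm_div, norm_mul, Real.norm_eq_abs, Real.norm_eq_abs, Real.norm_eq_abs, abs_pow,
      div_le_iff₀ hx3]
    calc |2| * |logTaylorError x - x ^ 3 / 3| ≤ 2 * (|x| ^ 4 / (1 - |x|)) := by
          rw [abs_two]; gcongr; exact abs_logTaylorError_sub_cube_le hx
      _ = 2 * |x| / (1 - |x|) * |x| ^ 3 := by ring
  have hlim : Tendsto (fun x : ℝ => 2 * |x| / (1 - |x|)) (𝓝[≠] 0) (𝓝 0) := by
    have : ContinuousAt (fun x : ℝ => 2 * |x| / (1 - |x|)) 0 := by fun_prop (disch := simp)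
    simpa using this.tendsto.mono_left nhdsWithin_le_nhds
  exact tendsto_iff_norm_sub_tendsto_zero.2
    (squeeze_zero' (Eventually.of_forall fun _ => norm_nonneg _) hbound hlim)

theorem hasDerivAt_taylorRemainderLog_zero : HasDerivAt taylorRemainderLog (2 / 3) 0 := by
  rw [hasDerivAt_iff_tendsto_slope]
  convert tendsto_taylorRemainderLog_div using 2 with x
  simp [slope_def_field, taylorRemainderLog]

theorem hasDerivAt_taylorRemainderLog {x : ℝ} (hx : 1 + x ≠ 0) (hx0 : x ≠ 0) :
    HasDerivAt taylorRemainderLog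
      (2 * (x ^ 3 / (1 + x) - 2 * logTaylorError x) / x ^ 3) x := by
  have hquot := ((hasDerivAt_logTaylorError hx).const_mul 2).div (hasDerivAt_pow 2 x)
    (pow_ne_zero 2 hx0)
  refine (hquot.congr_deriv ?_).congr_of_eventuallyEq ?_
  · field_simp
    ring
  · filter_upwards [isOpen_ne.mem_nhds hx0] with y hy using taylorRemainderLog_eq hy

theorem strictMonoOn_cube_div_sub_logTaylorError :
    StrictMonoOn (fun x => x ^ 3 / (1 + x) - 2 * logTaylorError x) (Ioi (-1)) := by
  have hderiv : ∀ x ∈ Ioi (-1 : ℝ), HasDerivAt (fun x => x ^ 3 / (1 + x) - 2 * logTaylorError x)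
      (x ^ 2 / (1 + x) ^ 2) x := fun x (hx : -1 < x) => by
    have hx1 : 1 + x ≠ 0 := by linarith
    have hcube := (hasDerivAt_pow 3 x).div ((hasDerivAt_id' x).const_add 1) hx1
    refine (hcube.sub ((hasDerivAt_logTaylorError hx1).const_mul 2)).congr_deriv ?_
    field_simp
    ring
  refine strictMonoOn_Ioi_of_hasDerivAt_pos_of_ne (c := 0) (by norm_num)
    (hderiv 0 (by norm_num)).continuousAt (fun x hx _ => hderiv x hx) fun x hx hx0 => ?_
  have : 0 < 1 + x := by linarith [mem_Ioi.1 hx]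
  positivity

theorem strictMonoOn_sq_mul_log_sub_logTaylorError :
    StrictMonoOn (fun x => x ^ 2 * log (1 + x) - logTaylorError x) (Ioi (-1)) := by
  have hderiv : ∀ x ∈ Ioi (-1 : ℝ), HasDerivAt (fun x => x ^ 2 * log (1 + x) - logTaylorError x)
      (2 * x * log (1 + x)) x := fun x (hx : -1 < x) => by
    have hx1 : 1 + x ≠ 0 := by linarith
    refine (((hasDerivAt_pow 2 x).mul (hasDerivAt_log_one_add hx1)).sub
      (hasDerivAt_logTaylorError hx1)).congr_deriv ?_
    field_simp
    ring
  refine strictMonoOn_Ioi_of_hasDerivAt_pos_of_ne (c := 0) (by norm_num)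
    (hderiv 0 (by norm_num)).continuousAt (fun x hx _ => hderiv x hx) fun x (hx : -1 < x) hx0 => ?_
  rcases hx0.lt_or_gt with hneg | hpos
  · have : log (1 + x) < 0 := log_neg (by linarith) (by linarith)
    nlinarith
  · have : 0 < log (1 + x) := log_pos (by linarith)
    positivity

theorem strictMonoOn_taylorRemainderLog : StrictMonoOn taylorRemainderLog (Ioi (-1)) := by
  refine strictMonoOn_Ioi_of_hasDerivAt_pos_of_ne (by norm_num)
    hasDerivAt_taylorRemainderLog_zero.continuousAt
    (fun x (hx : -1 < x) hx0 => hasDerivAt_taylorRemainderLog (by linarith) hx0)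
    fun x (hx : -1 < x) hx0 => ?_
  have h0 : (0 : ℝ) ∈ Ioi (-1) := by norm_num
  rcases hx0.lt_or_gt with hneg | hpos
  · have hq := strictMonoOn_cube_div_sub_logTaylorError hx h0 hneg
    simp only [ne_eq, OfNat.ofNat_ne_zero, not_false_eq_true, zero_pow, zero_div,
      logTaylorError_zero, mul_zero, sub_zero] at hq
    exact div_pos_of_neg_of_neg (by linarith) (Odd.pow_neg (by decide) hneg)
  · have hq := strictMonoOn_cube_div_sub_logTaylorError h0 hx hpos
    simp only [ne_eq, OfNat.ofNat_ne_zero, not_false_eq_true, zero_pow, zero_div,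
      logTaylorError_zero, mul_zero, sub_zero] at hq
    exact div_pos (by linarith) (by positivity)

theorem taylorRemainderLog_lt_one {x : ℝ} (hx : -1 < x) : taylorRemainderLog x < 1 := by
  rcases eq_or_ne x 0 with rfl | hx0
  · simp
  · have hlog : log (1 + x) < x := by
      linarith [log_lt_sub_one_of_pos (by linarith : 0 < 1 + x) (by simpa using hx0)]
    rw [taylorRemainderLog_eq hx0, div_lt_one (pow_two_pos_of_ne_zero hx0), logTaylorError]
    linarith

theorem two_mul_log_lt_taylorRemainderLog {x : ℝ} (hx : -1 < x) (hx0 : x < 0) :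
    2 * log (1 + x) < taylorRemainderLog x := by
  have h := strictMonoOn_sq_mul_log_sub_logTaylorError hx (by norm_num : (0 : ℝ) ∈ Ioi (-1)) hx0
  simp only [add_zero, log_one, mul_zero, logTaylorError_zero, sub_zero] at h
  rw [taylorRemainderLog_eq hx0.ne, lt_div_iff₀ (pow_two_pos_of_ne_zero hx0.ne)]
  linarith

/-- Properties of the remainder `R`:
(a) `R` is monotone increasing on `(-1, ∞)`;
(b) `R x < 1` for every `x > -1`;
(c) for `-1 < x ≤ -1/5`, `0 < -R x` and `-R x < -2 log (1+x)`;
(d) `R x / x → 2/3` as `x → 0`. -/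
theorem taylorRemainderLog_properties :
    MonotoneOn taylorRemainderLog (Set.Ioi (-1 : ℝ)) ∧
    (∀ x : ℝ, -1 < x → taylorRemainderLog x < 1) ∧
    (∀ x : ℝ, -1 < x → x ≤ -(1 / 5) →
      0 < -taylorRemainderLog x ∧ -taylorRemainderLog x < -(2 * Real.log (1 + x))) ∧
    Tendsto (fun x : ℝ => taylorRemainderLog x / x) (nhdsWithin 0 {(0 : ℝ)}ᶜ)
      (nhds (2 / 3)) := by
  refine ⟨strictMonoOn_taylorRemainderLog.monotoneOn, fun x hx => taylorRemainderLog_lt_one hx,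
    fun x hx hx5 => ?_, tendsto_taylorRemainderLog_div⟩
  have hneg : x < 0 := by linarith
  have hR : taylorRemainderLog x < taylorRemainderLog 0 :=
    strictMonoOn_taylorRemainderLog hx (by norm_num : (0 : ℝ) ∈ Ioi (-1)) hneg
  rw [taylorRemainderLog_zero] at hR
  exact ⟨by linarith, by linarith [two_mul_log_lt_taylorRemainderLog hx hneg]⟩
end

section
/- Under the stated conditions, −∫ log(p/p₀) dP₀ ≤ (3 + M) · h(p,p₀)², where the left-hand side is interpreted in the extended reals. -/
/-!
Put `u = √(p / p₀)`. Pointwise `-log (p / p₀) = 2 (u - 1 - log u) + (2 - 2u)`, and under `P₀` the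
second term integrates to exactly `h(p, p₀)²`, while `∫ (1 - u)² dP₀ ≤ h(p, p₀)²`. So it suffices to
bound `∫ 2 (u - 1 - log u) dP₀` by `(2 + M) ∫ (1 - u)² dP₀`.

Off `A_c` we have `u > 2/3`, where `2 (u - 1 - log u) ≤ 2 (1 - u)²`. On `A_c`, from
`-log u ≤ u^(-1/2) - u^(1/2)` we get `2 (u - 1 - log u) ≤ 2 (1 - u)² + (1 - u) / (2u)`, and AM-GM
splits the last term into `(M/2) (1 - u)² + (8M)⁻¹ p₀/p`. The hypothesis bounds `∫_{A_c} p₀/p` by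
`M P₀(A_c) / c`, and `(1 - u)² ≥ (1 + 2c)⁻²` on `A_c` turns `P₀(A_c)` back into an integral of
`(1 - u)²`; the constants close up because the hypothesis itself forces `(1 + 2c)² ≤ 4cM`.
-/

open Real MeasureTheory
open scoped ENNReal

theorem two_mul_log_le_sub_inv {a : ℝ} (ha : 1 ≤ a) : 2 * log a ≤ a - a⁻¹ := by
  have h := self_le_sinh_iff.mpr (log_nonneg ha)
  rw [sinh_log (by linarith)] at h
  linarith

theorem neg_log_sq_le_inv_sub {w : ℝ} (hw : 0 < w) (hw1 : w ≤ 1) : -log (w ^ 2) ≤ w⁻¹ - w := by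
  have h := two_mul_log_le_sub_inv ((one_le_inv₀ hw).mpr hw1)
  rw [log_inv, inv_inv] at h
  rw [log_pow]
  push_cast
  linarith

theorem two_mul_sub_one_sub_log_le_two_mul_sq {u : ℝ} (hu : 1 / 2 ≤ u) :
    2 * (u - 1 - log u) ≤ 2 * (1 - u) ^ 2 := by
  have hu0 : 0 < u := by linarith
  rcases le_or_gt 1 u with h1 | h1
  · have hinv : u * u⁻¹ = 1 := mul_inv_cancel₀ hu0.ne'
    nlinarith [one_sub_inv_le_log_of_pos hu0, inv_le_one_of_one_le₀ h1]
  obtain ⟨w, hw, rfl⟩ : ∃ w, 0 < w ∧ w ^ 2 = u := ⟨√u, sqrt_pos.mpr hu0, sq_sqrt hu0.le⟩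
  have hw1 : w ≤ 1 := by nlinarith
  have hsqrt : 2 * (w ^ 2 - 1) + 2 * (w⁻¹ - w) ≤ 2 * (1 - w ^ 2) ^ 2 := by
    rw [← sub_nonneg]
    have expand : 2 * (1 - w ^ 2) ^ 2 - (2 * (w ^ 2 - 1) + 2 * (w⁻¹ - w)) =
        2 * (1 - w) ^ 2 * (1 + w) * (w * (1 + w) - 1) / w := by
      field_simp
      ring
    have : 0 ≤ w * (1 + w) - 1 := by nlinarith
    rw [expand]
    positivity
  linarith [neg_log_sq_le_inv_sub hw hw1]

theorem two_mul_sub_one_sub_log_le_of_le_one {u t : ℝ} (hu : 0 < u) (hu1 : u ≤ 1) (ht : 0 < t) :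
    2 * (u - 1 - log u) ≤ (2 + t / 4) * (1 - u) ^ 2 + (u ^ 2)⁻¹ / (4 * t) := by
  have amgm : (1 - u) / (2 * u) ≤ t / 4 * (1 - u) ^ 2 + (u ^ 2)⁻¹ / (4 * t) := by
    rw [← sub_nonneg]
    have expand : t / 4 * (1 - u) ^ 2 + (u ^ 2)⁻¹ / (4 * t) - (1 - u) / (2 * u) =
        (t * (1 - u) * u - 1) ^ 2 / (4 * t * u ^ 2) := by
      field_simp
      ring
    rw [expand]
    positivity
  obtain ⟨w, hw, rfl⟩ : ∃ w, 0 < w ∧ w ^ 2 = u := ⟨√u, sqrt_pos.mpr hu, sq_sqrt hu.le⟩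
  have hw1 : w ≤ 1 := by nlinarith
  have hsqrt : 2 * (w ^ 2 - 1) + 2 * (w⁻¹ - w) ≤
      2 * (1 - w ^ 2) ^ 2 + (1 - w ^ 2) / (2 * w ^ 2) := by
    rw [← sub_nonneg]
    have expand : 2 * (1 - w ^ 2) ^ 2 + (1 - w ^ 2) / (2 * w ^ 2) -
        (2 * (w ^ 2 - 1) + 2 * (w⁻¹ - w)) =
        (1 - w ^ 2) * ((1 - 2 * w) ^ 2 + 4 * w ^ 2 * (1 - w ^ 2)) / (2 * w ^ 2) := by
      field_simp
      ring
    have : 0 ≤ 1 - w ^ 2 := by nlinarith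
    rw [expand]
    positivity
  linarith [neg_log_sq_le_inv_sub hw hw1]

theorem sq_le_inv_sq_iff_mul_le_one {b u : ℝ} (hb : 0 ≤ b) (hu : 0 < u) :
    b ^ 2 ≤ (u ^ 2)⁻¹ ↔ b * u ≤ 1 := by
  rw [← inv_pow, pow_le_pow_iff_left₀ hb (inv_nonneg.mpr hu.le) two_ne_zero, ← one_div,
    le_div_iff₀ hu]

theorem mul_sqrt_div_self (a : ℝ) {b : ℝ} (hb : 0 ≤ b) : b * √(a / b) = √a * √b := by
  rcases hb.eq_or_lt with rfl | hb
  · simp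
  have : √b ≠ 0 := (sqrt_pos.mpr hb).ne'
  rw [sqrt_div' a hb.le]
  nth_rewrite 1 [← mul_self_sqrt hb.le]
  field_simp

theorem mul_sqrt_div_sq_le {a b : ℝ} (ha : 0 ≤ a) (hb : 0 ≤ b) : b * √(a / b) ^ 2 ≤ a := by
  rw [sq_sqrt (div_nonneg ha hb)]
  rcases hb.eq_or_lt with rfl | hb
  · simpa using ha
  · rw [mul_div_cancel₀ a hb.ne']

theorem mul_two_sub_two_mul_sqrt_div {a b : ℝ} (ha : 0 ≤ a) (hb : 0 ≤ b) :
    b * (2 - 2 * √(a / b)) = (√a - √b) ^ 2 + (b - a) := by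
  linear_combination (-2) * mul_sqrt_div_self a hb - sq_sqrt ha - sq_sqrt hb

theorem mul_one_sub_sqrt_div_sq_le {a b : ℝ} (ha : 0 ≤ a) (hb : 0 ≤ b) :
    b * (1 - √(a / b)) ^ 2 ≤ (√a - √b) ^ 2 := by
  nlinarith [mul_sqrt_div_self a hb, mul_sqrt_div_sq_le ha hb, sq_sqrt ha, sq_sqrt hb]

section Integral

variable {X : Type*} [MeasurableSpace X] {ν : Measure X} {u : X → ℝ} {s : Set X}

theorem setIntegral_two_mul_sub_one_sub_log_le_of_half_le (hs : MeasurableSet s)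
    (hg : IntegrableOn (fun x => 2 * (u x - 1 - log (u x))) s ν)
    (hsq : IntegrableOn (fun x => (1 - u x) ^ 2) s ν) (hu : ∀ᵐ x ∂ν, x ∈ s → 1 / 2 ≤ u x) :
    ∫ x in s, 2 * (u x - 1 - log (u x)) ∂ν ≤ 2 * ∫ x in s, (1 - u x) ^ 2 ∂ν := by
  rw [← integral_const_mul]
  refine setIntegral_mono_ae_restrict hg (hsq.const_mul 2) ((ae_restrict_iff' hs).mpr ?_)
  filter_upwards [hu] with x hx hxs
  exact two_mul_sub_one_sub_log_le_two_mul_sq (hx hxs)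

theorem one_add_two_mul_sq_le_four_mul_mul_of_setIntegral_le (hs : MeasurableSet s)
    (hνs : 0 < ν.real s) {c M : ℝ} (hc : 0 < c) (hinv : IntegrableOn (fun x => (u x ^ 2)⁻¹) s ν)
    (hmem : ∀ᵐ x ∂ν, x ∈ s → (1 + 1 / (2 * c)) ^ 2 ≤ (u x ^ 2)⁻¹)
    (hcond : c * ∫ x in s, (u x ^ 2)⁻¹ ∂ν ≤ M * ν.real s) :
    (1 + 2 * c) ^ 2 ≤ 4 * c * M := by
  have hlow : (1 + 1 / (2 * c)) ^ 2 * ν.real s ≤ ∫ x in s, (u x ^ 2)⁻¹ ∂ν := by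
    rw [mul_comm, ← smul_eq_mul, ← setIntegral_const]
    exact setIntegral_mono_ae_restrict (integrableOn_const (ENNReal.toReal_pos_iff.mp hνs).2.ne)
      hinv ((ae_restrict_iff' hs).mpr hmem)
  have hκ : c * (1 + 1 / (2 * c)) ^ 2 ≤ M := le_of_mul_le_mul_right (by nlinarith) hνs
  rw [show c * (1 + 1 / (2 * c)) ^ 2 = (1 + 2 * c) ^ 2 / (4 * c) by field_simp; ring,
    div_le_iff₀ (by positivity)] at hκ
  linarith

theorem measureReal_le_mul_setIntegral_one_sub_sq [IsFiniteMeasure ν] (hs : MeasurableSet s)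
    {c : ℝ} (hc : 0 < c) (hsq : IntegrableOn (fun x => (1 - u x) ^ 2) s ν)
    (hmul : ∀ᵐ x ∂ν, x ∈ s → (1 + 1 / (2 * c)) * u x ≤ 1) :
    ν.real s ≤ (1 + 2 * c) ^ 2 * ∫ x in s, (1 - u x) ^ 2 ∂ν := by
  calc ν.real s = ∫ x in s, (1 : ℝ) ∂ν := by simp
    _ ≤ ∫ x in s, (1 + 2 * c) ^ 2 * (1 - u x) ^ 2 ∂ν := by
      refine setIntegral_mono_ae_restrict (integrableOn_const (measure_ne_top ν s))
        (hsq.const_mul _) ((ae_restrict_iff' hs).mpr ?_)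
      filter_upwards [hmul] with x hx hxs
      have h := hx hxs
      have : 1 ≤ (1 + 2 * c) * (1 - u x) := by
        field_simp at h
        linarith
      nlinarith
    _ = (1 + 2 * c) ^ 2 * ∫ x in s, (1 - u x) ^ 2 ∂ν := integral_const_mul _ _

theorem setIntegral_two_mul_sub_one_sub_log_le_of_le_inv_sq [IsFiniteMeasure ν]
    (hs : MeasurableSet s) {c M : ℝ} (hc : 0 < c) (hpos : ∀ᵐ x ∂ν, 0 < u x)
    (hg : IntegrableOn (fun x => 2 * (u x - 1 - log (u x))) s ν)
    (hsq : IntegrableOn (fun x => (1 - u x) ^ 2) s ν)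
    (hinv : IntegrableOn (fun x => (u x ^ 2)⁻¹) s ν)
    (hmem : ∀ᵐ x ∂ν, x ∈ s → (1 + 1 / (2 * c)) ^ 2 ≤ (u x ^ 2)⁻¹)
    (hcond : c * ∫ x in s, (u x ^ 2)⁻¹ ∂ν ≤ M * ν.real s) :
    ∫ x in s, 2 * (u x - 1 - log (u x)) ∂ν ≤ (2 + M) * ∫ x in s, (1 - u x) ^ 2 ∂ν := by
  by_cases hs0 : ν s = 0
  · simp [Measure.restrict_eq_zero.mpr hs0]
  have hνs : 0 < ν.real s := ENNReal.toReal_pos hs0 (measure_ne_top ν s)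
  have hM := one_add_two_mul_sq_le_four_mul_mul_of_setIntegral_le hs hνs hc hinv hmem hcond
  have hMpos : 0 < M := by nlinarith
  have hmul : ∀ᵐ x ∂ν, x ∈ s → (1 + 1 / (2 * c)) * u x ≤ 1 := by
    filter_upwards [hpos, hmem] with x hx hxm hxs
    exact (sq_le_inv_sq_iff_mul_le_one (by positivity) hx).mp (hxm hxs)
  have hmass := measureReal_le_mul_setIntegral_one_sub_sq hs hc hsq hmul
  -- AM-GM with weight `t = 2M`
  have hbound : ∀ᵐ x ∂ν, x ∈ s →
      2 * (u x - 1 - log (u x)) ≤ (2 + M / 2) * (1 - u x) ^ 2 + (u x ^ 2)⁻¹ / (8 * M) := by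
    filter_upwards [hpos, hmul] with x hx hxm hxs
    have hu1 : u x ≤ 1 := by nlinarith [hxm hxs, show 0 ≤ 1 / (2 * c) * u x by positivity]
    convert two_mul_sub_one_sub_log_le_of_le_one hx hu1 (mul_pos two_pos hMpos) using 3 <;> ring
  have hX : 0 ≤ ∫ x in s, (1 - u x) ^ 2 ∂ν := setIntegral_nonneg hs fun x _ => sq_nonneg _
  calc ∫ x in s, 2 * (u x - 1 - log (u x)) ∂ν
      ≤ ∫ x in s, ((2 + M / 2) * (1 - u x) ^ 2 + (u x ^ 2)⁻¹ / (8 * M)) ∂ν :=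
        setIntegral_mono_ae_restrict hg (by exact (hsq.const_mul _).add (hinv.div_const _))
          ((ae_restrict_iff' hs).mpr hbound)
    _ = (2 + M / 2) * ∫ x in s, (1 - u x) ^ 2 ∂ν + (∫ x in s, (u x ^ 2)⁻¹ ∂ν) / (8 * M) := by
        rw [integral_add (hsq.const_mul _) (hinv.div_const _), integral_const_mul, integral_div]
    _ ≤ (2 + M / 2) * ∫ x in s, (1 - u x) ^ 2 ∂ν + ν.real s / (8 * c) := by
        refine add_le_add_right ?_ _
        rw [div_le_div_iff₀ (by positivity) (by positivity)]
        nlinarith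
    _ ≤ (2 + M / 2) * ∫ x in s, (1 - u x) ^ 2 ∂ν + M / 2 * ∫ x in s, (1 - u x) ^ 2 ∂ν := by
        refine add_le_add_right ?_ _
        rw [div_le_iff₀ (by positivity)]
        nlinarith [mul_le_mul_of_nonneg_right hM hX]
    _ = (2 + M) * ∫ x in s, (1 - u x) ^ 2 ∂ν := by ring

theorem integral_two_mul_sub_one_sub_log_le [IsFiniteMeasure ν] (hu : Measurable u)
    (hpos : ∀ᵐ x ∂ν, 0 < u x) {c M : ℝ} (hc : 1 ≤ c) (hM : 0 ≤ M)
    (hg : Integrable (fun x => 2 * (u x - 1 - log (u x))) ν)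
    (hsq : Integrable (fun x => (1 - u x) ^ 2) ν) (hinv : Integrable (fun x => (u x ^ 2)⁻¹) ν)
    (hcond : c * ∫ x in {x | (1 + 1 / (2 * c)) ^ 2 ≤ (u x ^ 2)⁻¹}, (u x ^ 2)⁻¹ ∂ν ≤
      M * ν.real {x | (1 + 1 / (2 * c)) ^ 2 ≤ (u x ^ 2)⁻¹}) :
    ∫ x, 2 * (u x - 1 - log (u x)) ∂ν ≤ (2 + M) * ∫ x, (1 - u x) ^ 2 ∂ν := by
  set A := {x | (1 + 1 / (2 * c)) ^ 2 ≤ (u x ^ 2)⁻¹}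
  have hA : MeasurableSet A := measurableSet_le measurable_const (by fun_prop)
  have hcompl : ∀ᵐ x ∂ν, x ∈ Aᶜ → 1 / 2 ≤ u x := by
    filter_upwards [hpos] with x hx hxA
    have h : 1 < (1 + 1 / (2 * c)) * u x :=
      not_le.mp (mt (sq_le_inv_sq_iff_mul_le_one (by positivity) hx).mpr hxA)
    have : 1 / (2 * c) ≤ 1 / 2 := by gcongr; linarith
    nlinarith
  rw [← integral_add_compl hA hg, ← integral_add_compl hA hsq, mul_add]
  refine add_le_add (setIntegral_two_mul_sub_one_sub_log_le_of_le_inv_sq hA (by linarith) hpos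
    hg.integrableOn hsq.integrableOn hinv.integrableOn (ae_of_all _ fun _ hx => hx) hcond) ?_
  refine (setIntegral_two_mul_sub_one_sub_log_le_of_half_le hA.compl hg.integrableOn
    hsq.integrableOn hcompl).trans ?_
  exact mul_le_mul_of_nonneg_right (by linarith)
    (setIntegral_nonneg hA.compl fun x _ => sq_nonneg (1 - u x))

theorem integral_neg_log_sq_le [IsFiniteMeasure ν] (hu : Measurable u)
    (hpos : ∀ᵐ x ∂ν, 0 < u x) {c M : ℝ} (hc : 1 ≤ c) (hM : 0 ≤ M)
    (hlog : Integrable (fun x => -log (u x ^ 2)) ν) (hlin : Integrable (fun x => 2 - 2 * u x) ν)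
    (hsq : Integrable (fun x => (1 - u x) ^ 2) ν) (hinv : Integrable (fun x => (u x ^ 2)⁻¹) ν)
    (hcond : c * ∫ x in {x | (1 + 1 / (2 * c)) ^ 2 ≤ (u x ^ 2)⁻¹}, (u x ^ 2)⁻¹ ∂ν ≤
      M * ν.real {x | (1 + 1 / (2 * c)) ^ 2 ≤ (u x ^ 2)⁻¹}) :
    ∫ x, -log (u x ^ 2) ∂ν ≤ (2 + M) * ∫ x, (1 - u x) ^ 2 ∂ν + ∫ x, (2 - 2 * u x) ∂ν := by
  have hsplit (x : X) : -log (u x ^ 2) = 2 * (u x - 1 - log (u x)) + (2 - 2 * u x) := by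
    rw [log_pow]
    push_cast
    ring
  have hg : Integrable (fun x => 2 * (u x - 1 - log (u x))) ν :=
    (hlog.sub hlin).congr (ae_of_all _ fun x => by simp only [Pi.sub_apply, hsplit]; ring)
  simp_rw [hsplit]
  rw [integral_add hg hlin]
  exact add_le_add_left (integral_two_mul_sub_one_sub_log_le hu hpos hc hM hg hsq hinv hcond) _

theorem mul_setIntegral_le_mul_measureReal [IsFiniteMeasure ν] {f : X → ℝ}
    (hf : AEStronglyMeasurable f (ν.restrict s)) (hfnn : 0 ≤ᵐ[ν.restrict s] f) {c M : ℝ}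
    (hc : 0 ≤ c) (hM : 0 ≤ M)
    (h : ν s = 0 ∨
      ENNReal.ofReal c * ∫⁻ x in s, ENNReal.ofReal (f x) ∂ν ≤ ENNReal.ofReal M * ν s) :
    c * ∫ x in s, f x ∂ν ≤ M * ν.real s := by
  rcases h with h0 | h
  · simp [Measure.restrict_eq_zero.mpr h0, measureReal_def, h0]
  rw [integral_eq_lintegral_of_nonneg_ae hfnn hf, measureReal_def,
    ← ENNReal.toReal_ofReal hc, ← ENNReal.toReal_ofReal hM, ← ENNReal.toReal_mul,
    ← ENNReal.toReal_mul]
  exact ENNReal.toReal_mono (ENNReal.mul_ne_top ENNReal.ofReal_ne_top (measure_ne_top ν s)) h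

theorem coe_lintegral_ofReal_sub_coe_lintegral_ofReal_neg_le {f : X → ℝ}
    (hf : AEStronglyMeasurable f ν) (hpos : ∫⁻ x, ENNReal.ofReal (f x) ∂ν ≠ ⊤) {C : ℝ}
    (hC : Integrable f ν → ∫ x, f x ∂ν ≤ C) :
    ((∫⁻ x, ENNReal.ofReal (f x) ∂ν : ENNReal) : EReal) -
      ((∫⁻ x, ENNReal.ofReal (-f x) ∂ν : ENNReal) : EReal) ≤ C := by
  by_cases hneg : ∫⁻ x, ENNReal.ofReal (-f x) ∂ν = ⊤
  · simp [hneg, EReal.sub_top]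
  have hfi : Integrable f ν := by
    refine ⟨hf, ?_⟩
    calc ∫⁻ x, ‖f x‖ₑ ∂ν ≤ ∫⁻ x, (ENNReal.ofReal (f x) + ENNReal.ofReal (-f x)) ∂ν := by
          refine lintegral_mono fun x => ?_
          rw [Real.enorm_eq_ofReal_abs]
          rcases le_total 0 (f x) with h | h
          · rw [abs_of_nonneg h]
            exact le_self_add
          · rw [abs_of_nonpos h]
            exact le_add_self
      _ = ∫⁻ x, ENNReal.ofReal (f x) ∂ν + ∫⁻ x, ENNReal.ofReal (-f x) ∂ν :=
          lintegral_add_left' hf.aemeasurable.ennreal_ofReal _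
      _ < ⊤ := ENNReal.add_lt_top.mpr ⟨hpos.lt_top, lt_top_iff_ne_top.mpr hneg⟩
  rw [← EReal.coe_ennreal_toReal hpos, ← EReal.coe_ennreal_toReal hneg, ← EReal.coe_sub,
    ← integral_eq_lintegral_pos_part_sub_lintegral_neg_part hfi, EReal.coe_le_coe_iff]
  exact hC hfi

end Integral

section Hellinger

variable {X : Type*} [MeasurableSpace X] {μ : Measure X} {p p₀ : X → ℝ}

theorem integral_withDensity_ofReal (hp₀ : Measurable p₀) (hp₀nn : ∀ x, 0 ≤ p₀ x) (φ : X → ℝ) :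
    ∫ x, φ x ∂μ.withDensity (fun x => ENNReal.ofReal (p₀ x)) = ∫ x, p₀ x * φ x ∂μ := by
  rw [integral_withDensity_eq_integral_toReal_smul hp₀.ennreal_ofReal
    (ae_of_all _ fun _ => ENNReal.ofReal_lt_top)]
  simp_rw [ENNReal.toReal_ofReal (hp₀nn _), smul_eq_mul]

theorem integrable_withDensity_ofReal_iff (hp₀ : Measurable p₀) (hp₀nn : ∀ x, 0 ≤ p₀ x)
    {φ : X → ℝ} :
    Integrable φ (μ.withDensity fun x => ENNReal.ofReal (p₀ x)) ↔
      Integrable (fun x => p₀ x * φ x) μ := by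
  rw [integrable_withDensity_iff_integrable_smul' hp₀.ennreal_ofReal
    (ae_of_all _ fun _ => ENNReal.ofReal_lt_top)]
  simp_rw [ENNReal.toReal_ofReal (hp₀nn _), smul_eq_mul]

theorem ae_withDensity_ofReal_pos (hp₀ : Measurable p₀) :
    ∀ᵐ x ∂μ.withDensity (fun x => ENNReal.ofReal (p₀ x)), 0 < p₀ x :=
  (ae_withDensity_iff hp₀.ennreal_ofReal).mpr
    (ae_of_all μ fun _ hx => ENNReal.ofReal_pos.mp (pos_iff_ne_zero.mpr hx))

theorem integrable_and_integral_eq_one_of_lintegral_ofReal_eq_one (hp : Measurable p)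
    (hpnn : ∀ x, 0 ≤ p x) (h : ∫⁻ x, ENNReal.ofReal (p x) ∂μ = 1) :
    Integrable p μ ∧ ∫ x, p x ∂μ = 1 :=
  ⟨(lintegral_ofReal_ne_top_iff_integrable hp.aestronglyMeasurable (ae_of_all _ hpnn)).mp
      (by simp [h]),
    by rw [integral_eq_lintegral_of_nonneg_ae (ae_of_all _ hpnn) hp.aestronglyMeasurable, h,
      ENNReal.toReal_one]⟩

theorem integrable_sqrt_sub_sqrt_sq (hp : Measurable p) (hp₀ : Measurable p₀)
    (hpnn : ∀ x, 0 ≤ p x) (hp₀nn : ∀ x, 0 ≤ p₀ x) (hpi : Integrable p μ)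
    (hp₀i : Integrable p₀ μ) :
    Integrable (fun x => (√(p x) - √(p₀ x)) ^ 2) μ := by
  refine (hpi.add hp₀i).mono' (by fun_prop) (ae_of_all _ fun x => ?_)
  rw [norm_of_nonneg (sq_nonneg _), Pi.add_apply]
  nlinarith [sq_sqrt (hpnn x), sq_sqrt (hp₀nn x), sqrt_nonneg (p x), sqrt_nonneg (p₀ x)]

theorem integrable_withDensity_one_sub_sqrt_div_sq (hp : Measurable p) (hp₀ : Measurable p₀)
    (hpnn : ∀ x, 0 ≤ p x) (hp₀nn : ∀ x, 0 ≤ p₀ x) (hpi : Integrable p μ)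
    (hp₀i : Integrable p₀ μ) :
    Integrable (fun x => (1 - √(p x / p₀ x)) ^ 2)
      (μ.withDensity fun x => ENNReal.ofReal (p₀ x)) := by
  rw [integrable_withDensity_ofReal_iff hp₀ hp₀nn]
  refine (integrable_sqrt_sub_sqrt_sq hp hp₀ hpnn hp₀nn hpi hp₀i).mono' (by fun_prop)
    (ae_of_all _ fun x => ?_)
  rw [norm_of_nonneg (mul_nonneg (hp₀nn x) (sq_nonneg _))]
  exact mul_one_sub_sqrt_div_sq_le (hpnn x) (hp₀nn x)

theorem integral_withDensity_one_sub_sqrt_div_sq_le (hp : Measurable p) (hp₀ : Measurable p₀)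
    (hpnn : ∀ x, 0 ≤ p x) (hp₀nn : ∀ x, 0 ≤ p₀ x) (hpi : Integrable p μ)
    (hp₀i : Integrable p₀ μ) :
    ∫ x, (1 - √(p x / p₀ x)) ^ 2 ∂μ.withDensity (fun x => ENNReal.ofReal (p₀ x)) ≤
      ∫ x, (√(p x) - √(p₀ x)) ^ 2 ∂μ := by
  rw [integral_withDensity_ofReal hp₀ hp₀nn]
  refine integral_mono ?_ (integrable_sqrt_sub_sqrt_sq hp hp₀ hpnn hp₀nn hpi hp₀i)
    fun x => mul_one_sub_sqrt_div_sq_le (hpnn x) (hp₀nn x)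
  exact (integrable_withDensity_ofReal_iff hp₀ hp₀nn).mp
    (integrable_withDensity_one_sub_sqrt_div_sq hp hp₀ hpnn hp₀nn hpi hp₀i)

theorem integrable_withDensity_two_sub_two_mul_sqrt_div (hp : Measurable p)
    (hp₀ : Measurable p₀) (hpnn : ∀ x, 0 ≤ p x) (hp₀nn : ∀ x, 0 ≤ p₀ x) (hpi : Integrable p μ)
    (hp₀i : Integrable p₀ μ) :
    Integrable (fun x => 2 - 2 * √(p x / p₀ x))
      (μ.withDensity fun x => ENNReal.ofReal (p₀ x)) := by
  rw [integrable_withDensity_ofReal_iff hp₀ hp₀nn]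
  simp_rw [mul_two_sub_two_mul_sqrt_div (hpnn _) (hp₀nn _)]
  exact (integrable_sqrt_sub_sqrt_sq hp hp₀ hpnn hp₀nn hpi hp₀i).add (hp₀i.sub hpi)

theorem integral_withDensity_two_sub_two_mul_sqrt_div (hp : Measurable p) (hp₀ : Measurable p₀)
    (hpnn : ∀ x, 0 ≤ p x) (hp₀nn : ∀ x, 0 ≤ p₀ x) (hpi : Integrable p μ)
    (hp₀i : Integrable p₀ μ) (h : ∫ x, p x ∂μ = ∫ x, p₀ x ∂μ) :
    ∫ x, (2 - 2 * √(p x / p₀ x)) ∂μ.withDensity (fun x => ENNReal.ofReal (p₀ x)) =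
      ∫ x, (√(p x) - √(p₀ x)) ^ 2 ∂μ := by
  rw [integral_withDensity_ofReal hp₀ hp₀nn]
  simp_rw [mul_two_sub_two_mul_sqrt_div (hpnn _) (hp₀nn _)]
  have hdiff : Integrable (fun x => p₀ x - p x) μ := hp₀i.sub hpi
  rw [integral_add (integrable_sqrt_sub_sqrt_sq hp hp₀ hpnn hp₀nn hpi hp₀i) hdiff,
    integral_sub hp₀i hpi, h, sub_self, add_zero]

theorem integral_neg_log_div_le_hellinger (hp : Measurable p) (hp₀ : Measurable p₀)
    (hpnn : ∀ x, 0 ≤ p x) (hp₀nn : ∀ x, 0 ≤ p₀ x) (hpi : Integrable p μ)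
    (hp₀i : Integrable p₀ μ) (h : ∫ x, p x ∂μ = ∫ x, p₀ x ∂μ)
    (hp_ne : ∀ᵐ x ∂μ.withDensity (fun x => ENNReal.ofReal (p₀ x)), p x ≠ 0)
    {c M : ℝ} (hc : 1 ≤ c) (hM : 0 ≤ M)
    (hinv : Integrable (fun x => p₀ x / p x) (μ.withDensity fun x => ENNReal.ofReal (p₀ x)))
    (hcond : c * ∫ x in {x | (1 + 1 / (2 * c)) ^ 2 ≤ p₀ x / p x}, p₀ x / p x
        ∂μ.withDensity (fun x => ENNReal.ofReal (p₀ x)) ≤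
      M * (μ.withDensity fun x => ENNReal.ofReal (p₀ x)).real
        {x | (1 + 1 / (2 * c)) ^ 2 ≤ p₀ x / p x})
    (hlog : Integrable (fun x => -log (p x / p₀ x))
      (μ.withDensity fun x => ENNReal.ofReal (p₀ x))) :
    ∫ x, -log (p x / p₀ x) ∂μ.withDensity (fun x => ENNReal.ofReal (p₀ x)) ≤
      (3 + M) * ∫ x, (√(p x) - √(p₀ x)) ^ 2 ∂μ := by
  have := isFiniteMeasure_withDensity_ofReal hp₀i.2
  set u : X → ℝ := fun x => √(p x / p₀ x)
  have hu_sq (x : X) : u x ^ 2 = p x / p₀ x := sq_sqrt (div_nonneg (hpnn x) (hp₀nn x))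
  have hu_inv (x : X) : (u x ^ 2)⁻¹ = p₀ x / p x := by rw [hu_sq, inv_div]
  have hupos : ∀ᵐ x ∂μ.withDensity (fun x => ENNReal.ofReal (p₀ x)), 0 < u x := by
    filter_upwards [ae_withDensity_ofReal_pos hp₀, hp_ne] with x hx₀ hx
    exact sqrt_pos.mpr (div_pos ((hpnn x).lt_of_ne' hx) hx₀)
  simp_rw [← hu_sq]
  refine (integral_neg_log_sq_le (by fun_prop) hupos hc hM (by simpa only [hu_sq] using hlog)
    (integrable_withDensity_two_sub_two_mul_sqrt_div hp hp₀ hpnn hp₀nn hpi hp₀i)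
    (integrable_withDensity_one_sub_sqrt_div_sq hp hp₀ hpnn hp₀nn hpi hp₀i)
    (by simpa only [hu_inv] using hinv) (by simpa only [hu_inv] using hcond)).trans ?_
  calc _ ≤ (2 + M) * ∫ x, (√(p x) - √(p₀ x)) ^ 2 ∂μ + ∫ x, (√(p x) - √(p₀ x)) ^ 2 ∂μ :=
        add_le_add (mul_le_mul_of_nonneg_left
          (integral_withDensity_one_sub_sqrt_div_sq_le hp hp₀ hpnn hp₀nn hpi hp₀i) (by linarith))
          (integral_withDensity_two_sub_two_mul_sqrt_div hp hp₀ hpnn hp₀nn hpi hp₀i h).le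
    _ = (3 + M) * ∫ x, (√(p x) - √(p₀ x)) ^ 2 ∂μ := by ring

end Hellinger

theorem neg_integral_log_ratio_le_hellinger_general
    {X : Type*} [MeasurableSpace X] (μ : Measure X)
    (p p₀ : X → ℝ) (hp : Measurable p) (hp₀ : Measurable p₀)
    (hpnn : ∀ x, 0 ≤ p x) (hp₀nn : ∀ x, 0 ≤ p₀ x)
    (hpden : ∫⁻ x, ENNReal.ofReal (p x) ∂μ = 1)
    (hp₀den : ∫⁻ x, ENNReal.ofReal (p₀ x) ∂μ = 1)
    (P₀ : Measure X) (hP₀ : P₀ = μ.withDensity fun x => ENNReal.ofReal (p₀ x))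
    (hzero : P₀ {x | p x = 0} = 0)
    (hfin : ∫⁻ x, ENNReal.ofReal (p₀ x / p x) ∂P₀ < ⊤)
    (M : ℝ) (hM : 0 ≤ M)
    (hMbound : ∃ c : ℝ, 1 ≤ c ∧
      (P₀ {x | (1 + 1 / (2 * c)) ^ 2 ≤ p₀ x / p x} = 0 ∨
        ENNReal.ofReal c *
            (∫⁻ x in {x | (1 + 1 / (2 * c)) ^ 2 ≤ p₀ x / p x},
              ENNReal.ofReal (p₀ x / p x) ∂P₀) ≤
          ENNReal.ofReal M * P₀ {x | (1 + 1 / (2 * c)) ^ 2 ≤ p₀ x / p x})) :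
    ((∫⁻ x, ENNReal.ofReal (-Real.log (p x / p₀ x)) ∂P₀ : ℝ≥0∞) : EReal) -
        ((∫⁻ x, ENNReal.ofReal (Real.log (p x / p₀ x)) ∂P₀ : ℝ≥0∞) : EReal) ≤
      ((3 + M : ℝ) : EReal) *
        ((∫⁻ x, ENNReal.ofReal ((Real.sqrt (p x) - Real.sqrt (p₀ x)) ^ 2) ∂μ : ℝ≥0∞) :
          EReal) := by
  subst hP₀
  obtain ⟨c, hc, hcond⟩ := hMbound
  obtain ⟨hpi, hp_one⟩ := integrable_and_integral_eq_one_of_lintegral_ofReal_eq_one hp hpnn hpden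
  obtain ⟨hp₀i, hp₀_one⟩ :=
    integrable_and_integral_eq_one_of_lintegral_ofReal_eq_one hp₀ hp₀nn hp₀den
  have := isFiniteMeasure_withDensity_ofReal hp₀i.2
  have hratio_nn (x : X) : 0 ≤ p₀ x / p x := div_nonneg (hp₀nn x) (hpnn x)
  have hinv := (lintegral_ofReal_ne_top_iff_integrable (hp₀.div hp).aestronglyMeasurable
    (ae_of_all _ hratio_nn)).mp hfin.ne
  have hcond' := mul_setIntegral_le_mul_measureReal (f := fun x => p₀ x / p x)
    (hp₀.div hp).aestronglyMeasurable (ae_of_all _ hratio_nn) (by linarith) hM hcond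
  have hlog_pos : ∫⁻ x, ENNReal.ofReal (-Real.log (p x / p₀ x))
      ∂μ.withDensity (fun x => ENNReal.ofReal (p₀ x)) ≠ ⊤ := by
    refine ne_top_of_le_ne_top hfin.ne (lintegral_mono fun x => ENNReal.ofReal_le_ofReal ?_)
    rw [← Real.log_inv, inv_div]
    exact Real.log_le_self (hratio_nn x)
  rw [← ofReal_integral_eq_lintegral_ofReal (integrable_sqrt_sub_sqrt_sq hp hp₀ hpnn hp₀nn hpi hp₀i)
    (ae_of_all _ fun _ => sq_nonneg _), EReal.coe_ennreal_ofReal,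
    max_eq_left (integral_nonneg fun _ => sq_nonneg _), ← EReal.coe_mul]
  simpa only [neg_neg] using coe_lintegral_ofReal_sub_coe_lintegral_ofReal_neg_le
    (f := fun x => -Real.log (p x / p₀ x))
    (Real.measurable_log.comp (hp.div hp₀)).neg.aestronglyMeasurable hlog_pos
    (integral_neg_log_div_le_hellinger hp hp₀ hpnn hp₀nn hpi hp₀i (hp_one.trans hp₀_one.symm)
      (measure_eq_zero_iff_ae_notMem.mp hzero) hc hM hinv hcond')

/-- Lemma (KL bounded by squared Hellinger): under the stated conditions,
`-∫ log(p/p₀) dP₀ ≤ (3 + M) · h(p,p₀)²`, the left-hand side being interpreted in the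
extended reals (positive part minus negative part of the integral of `-log(p/p₀)`). -/
theorem neg_integral_log_ratio_le_hellinger
    {X : Type*} [MeasurableSpace X] (μ : Measure X) [SigmaFinite μ]
    (p p₀ : X → ℝ) (hp : Measurable p) (hp₀ : Measurable p₀)
    (hpnn : ∀ x, 0 ≤ p x) (hp₀nn : ∀ x, 0 ≤ p₀ x)
    (hpden : ∫⁻ x, ENNReal.ofReal (p x) ∂μ = 1)
    (hp₀den : ∫⁻ x, ENNReal.ofReal (p₀ x) ∂μ = 1)
    (P₀ : Measure X) (hP₀ : P₀ = μ.withDensity fun x => ENNReal.ofReal (p₀ x))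
    (hzero : P₀ {x | p x = 0} = 0)
    (hfin : ∫⁻ x, ENNReal.ofReal (p₀ x / p x) ∂P₀ < ⊤)
    (M : ℝ) (hM : 0 ≤ M)
    (hMbound : ∃ c : ℝ, 1 ≤ c ∧
      (P₀ {x | (1 + 1 / (2 * c)) ^ 2 ≤ p₀ x / p x} = 0 ∨
        ENNReal.ofReal c *
            (∫⁻ x in {x | (1 + 1 / (2 * c)) ^ 2 ≤ p₀ x / p x},
              ENNReal.ofReal (p₀ x / p x) ∂P₀) ≤
          ENNReal.ofReal M * P₀ {x | (1 + 1 / (2 * c)) ^ 2 ≤ p₀ x / p x})) :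
    ((∫⁻ x, ENNReal.ofReal (-Real.log (p x / p₀ x)) ∂P₀ : ℝ≥0∞) : EReal) -
        ((∫⁻ x, ENNReal.ofReal (Real.log (p x / p₀ x)) ∂P₀ : ℝ≥0∞) : EReal) ≤
      ((3 + M : ℝ) : EReal) *
        ((∫⁻ x, ENNReal.ofReal ((Real.sqrt (p x) - Real.sqrt (p₀ x)) ^ 2) ∂μ : ℝ≥0∞) :
          EReal) :=
  neg_integral_log_ratio_le_hellinger_general μ p p₀ hp hp₀ hpnn hp₀nn hpden hp₀den P₀ hP₀ hzero
    hfin M hM hMbound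
end

section
/- Under the stated conditions, assume additionally that log(p/p₀) is P₀-integrable and set m := ∫ log(p/p₀) dP₀. Then ‖(1/4)(log(p/p₀) − m)‖²_{P₀,B} ≤ (2 + M) · h(p,p₀)². -/
/-!
Put `Y = ¼ log (p/p₀)`, `m = E Y` and `t = √(p₀/p)` under `P₀`, so that `e^{-2Y} = t`. Bounding
`e^|y| - 1 - |y|` by `e^y + e^{-y} - 2`, the centred Bernstein functional is at most
`a e^{-m} + b e^m - 2` with `a = E e^Y`, `b = E e^{-Y}`. Jensen gives `e^m ≤ a` and `e^{-m} ≤ b`,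
so this is at most `ab - 1 ≤ E ((e^Y + e^{-Y}) / 2)² - 1 = ¼ E (t⁻¹ + t - 2)`.

Pointwise `t⁻¹ + t - 2 = t (1 - t⁻¹)² ≤ K (1 - t⁻¹)² + (t² - κ)⁺ / (2K)` with `K = 2 + M` and
`κ = (1 + 1/(2c))² ≤ K²`. On `A_c = {t² ≥ κ}` the hypothesis and the Chebyshev-type bound
`P₀(A_c) ≤ (2c + 1)² E [(1 - t⁻¹)²; A_c]` give `E [t² - κ; A_c] ≤ M² E [(1 - t⁻¹)²; A_c]`, and
`M² / (2K) ≤ K`. Finally `E (1 - t⁻¹)² = ∫ (√p₀ - √p)² 1_{p₀ > 0} dμ ≤ h(p, p₀)²`.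
-/

open MeasureTheory Real ENNReal

lemma exp_abs_sub_one_sub_abs_le (x : ℝ) : exp |x| - 1 - |x| ≤ exp x + exp (-x) - 2 := by
  rcases abs_cases x with ⟨h, -⟩ | ⟨h, -⟩ <;> rw [h] <;>
    linarith [add_one_le_exp (-x), add_one_le_exp x]

lemma exp_abs_sub_one_sub_abs_nonneg (x : ℝ) : 0 ≤ exp |x| - 1 - |x| := by
  linarith [add_one_le_exp |x|]

lemma div_add_mul_le_one_add_mul {a b y : ℝ} (hy : 0 < y) (hya : y ≤ a) (hby : 1 ≤ b * y) :
    a / y + b * y ≤ 1 + a * b := by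
  rw [div_add' _ _ _ hy.ne', div_le_iff₀ hy]
  nlinarith [mul_nonneg (sub_nonneg.2 hya) (sub_nonneg.2 hby)]

lemma exp_log_div_two {u : ℝ} (hu : 0 < u) : exp (log u / 2) = √u := by
  rw [sqrt_eq_rpow, rpow_def_of_pos hu]
  ring_nf

lemma mul_one_sub_sqrt_div_sq {a : ℝ} (b : ℝ) (ha : 0 < a) :
    a * (1 - √(b / a)) ^ 2 = (√b - √a) ^ 2 := by
  rw [sqrt_div' _ ha.le]
  have hsq := sq_sqrt ha.le
  have : 0 < √a := sqrt_pos.2 ha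
  field_simp
  rw [hsq]
  ring

lemma inv_add_sub_two_le_mul_one_sub_inv_sq {t K : ℝ} (ht : 0 ≤ t) (htK : t ≤ K) :
    t⁻¹ + t - 2 ≤ K * (1 - t⁻¹) ^ 2 := by
  rcases ht.eq_or_lt with rfl | ht
  · simpa using (by linarith : (-2 : ℝ) ≤ K)
  have h : t⁻¹ + t - 2 = t * (1 - t⁻¹) ^ 2 := by field_simp; ring
  rw [h]
  gcongr

lemma inv_add_sub_two_le_of_sq_le {t K κ : ℝ} (ht : 0 ≤ t) (hK : 1 ≤ K) (hκK : κ ≤ K ^ 2)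
    (hκt : κ ≤ t ^ 2) : t⁻¹ + t - 2 ≤ K * (1 - t⁻¹) ^ 2 + (t ^ 2 - κ) / (2 * K) := by
  rcases le_or_gt t K with htK | htK
  · have : 0 ≤ (t ^ 2 - κ) / (2 * K) := div_nonneg (by linarith) (by linarith)
    linarith [inv_add_sub_two_le_mul_one_sub_inv_sq ht htK]
  have ht0 : 0 < t := by linarith
  have hw : (1 - t⁻¹) ^ 2 ≤ 1 := by
    have : t⁻¹ ≤ 1 := inv_le_one_of_one_le₀ (by linarith)
    nlinarith [inv_pos.2 ht0]
  have hlin : t - K ≤ (t ^ 2 - κ) / (2 * K) := by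
    rw [le_div_iff₀ (by linarith)]
    nlinarith
  have h : t⁻¹ + t - 2 = K * (1 - t⁻¹) ^ 2 + (t - K) * (1 - t⁻¹) ^ 2 := by field_simp; ring
  rw [h]
  nlinarith

lemma one_le_sq_mul_one_sub_inv_sq {t c : ℝ} (hc : 0 < c) (ht : 1 + 1 / (2 * c) ≤ t) :
    1 ≤ (2 * c + 1) ^ 2 * (1 - t⁻¹) ^ 2 := by
  rw [show 1 + 1 / (2 * c) = (2 * c + 1) / (2 * c) by field_simp, div_le_iff₀ (by positivity)] at ht
  have ht0 : 0 < t := by nlinarith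
  have h : 1 ≤ (2 * c + 1) * (1 - t⁻¹) := by
    rw [show (2 * c + 1) * (1 - t⁻¹) = (2 * c + 1) * (t - 1) / t by field_simp, le_div_iff₀ ht0]
    nlinarith
  nlinarith

lemma MeasureTheory.Integrable.sqrt {X : Type*} [MeasurableSpace X] {P : Measure X}
    [IsFiniteMeasure P] {V : X → ℝ} (hV : Integrable V P) : Integrable (fun x => √(V x)) P := by
  refine ((integrable_const 1).add hV.abs).mono' (continuous_sqrt.comp_aestronglyMeasurable hV.1)
    (.of_forall fun x => ?_)
  rw [Real.norm_of_nonneg (sqrt_nonneg _), Pi.add_apply]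
  rcases le_total 0 (V x) with h | h
  · nlinarith [sq_sqrt h, sqrt_nonneg (V x), abs_of_nonneg h]
  · rw [sqrt_eq_zero'.2 h]; positivity

section Exponential

variable {Ω : Type*} [MeasurableSpace Ω] {P : Measure Ω} {Y : Ω → ℝ}

lemma integrable_exp_of_integrable_exp_two_mul [IsFiniteMeasure P]
    (hY : AEStronglyMeasurable Y P) (h : Integrable (fun ω => exp (2 * Y ω)) P) :
    Integrable (fun ω => exp (Y ω)) P := by
  refine ((integrable_const 1).add h).mono' (continuous_exp.comp_aestronglyMeasurable hY)
    (.of_forall fun ω => ?_)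
  rw [Pi.add_apply, norm_of_nonneg (exp_pos _).le, two_mul, exp_add]
  nlinarith [sq_nonneg (exp (Y ω) - 1)]

lemma exp_integral_le_integral_exp [IsProbabilityMeasure P] (hY : Integrable Y P)
    (h : Integrable (fun ω => exp (Y ω)) P) : exp (∫ ω, Y ω ∂P) ≤ ∫ ω, exp (Y ω) ∂P :=
  convexOn_exp.map_integral_le continuous_exp.continuousOn isClosed_univ
    (.of_forall fun _ => trivial) hY h

lemma sq_integral_le_integral_sq [IsProbabilityMeasure P] (hY : Integrable Y P)
    (h : Integrable (fun ω => Y ω ^ 2) P) : (∫ ω, Y ω ∂P) ^ 2 ≤ ∫ ω, Y ω ^ 2 ∂P :=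
  (even_two.convexOn_pow).map_integral_le (continuous_pow 2).continuousOn isClosed_univ
    (.of_forall fun _ => trivial) hY h

variable [IsProbabilityMeasure P]

lemma integrable_exp_abs_sub_sub_one_sub_abs (hY : Integrable Y P)
    (hexp : Integrable (fun ω => exp (2 * Y ω)) P)
    (hexp_neg : Integrable (fun ω => exp (-(2 * Y ω))) P) (a : ℝ) :
    Integrable (fun ω => exp |Y ω - a| - 1 - |Y ω - a|) P := by
  have hYa : AEStronglyMeasurable (fun ω => Y ω - a) P := hY.1.sub aestronglyMeasurable_const
  refine ((integrable_exp_of_integrable_exp_two_mul hYa ?_).add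
      (integrable_exp_of_integrable_exp_two_mul hYa.neg ?_)).mono'
    (((continuous_exp.comp_aestronglyMeasurable hYa.norm).sub aestronglyMeasurable_const).sub
      hYa.norm) (.of_forall fun ω => ?_)
  · convert hexp.div_const (exp (2 * a)) using 2 with ω
    rw [← exp_sub, mul_sub]
  · convert hexp_neg.mul_const (exp (2 * a)) using 2 with ω
    rw [← exp_add, Pi.neg_apply]
    ring_nf
  · have h := exp_abs_sub_one_sub_abs_le (Y ω - a)
    rw [Real.norm_of_nonneg (exp_abs_sub_one_sub_abs_nonneg _)]
    simp only [Pi.add_apply, Pi.neg_apply]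
    linarith

theorem integral_exp_abs_sub_integral_le (hY : Integrable Y P)
    (hexp : Integrable (fun ω => exp (2 * Y ω)) P)
    (hexp_neg : Integrable (fun ω => exp (-(2 * Y ω))) P) :
    ∫ ω, (exp |Y ω - ∫ ω', Y ω' ∂P| - 1 - |Y ω - ∫ ω', Y ω' ∂P|) ∂P ≤
      (∫ ω, (exp (2 * Y ω) + exp (-(2 * Y ω)) - 2) ∂P) / 4 := by
  set m := ∫ ω, Y ω ∂P
  have hE : Integrable (fun ω => exp (Y ω)) P :=
    integrable_exp_of_integrable_exp_two_mul hY.1 hexp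
  have hE_neg : Integrable (fun ω => exp (-Y ω)) P :=
    integrable_exp_of_integrable_exp_two_mul hY.neg.1 (by simpa only [mul_neg] using hexp_neg)
  set a := ∫ ω, exp (Y ω) ∂P
  set b := ∫ ω, exp (-Y ω) ∂P
  have ha : exp m ≤ a := exp_integral_le_integral_exp hY hE
  have hb : exp (-m) ≤ b := by
    simpa only [m, integral_neg] using
      exp_integral_le_integral_exp (Y := fun ω => -Y ω) hY.neg hE_neg
  have hab : 1 ≤ b * exp m :=
    calc (1 : ℝ) = exp (-m) * exp m := by rw [← exp_add, neg_add_cancel, exp_zero]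
      _ ≤ b * exp m := by gcongr
  have hsum : Integrable (fun ω => exp (Y ω) / exp m + exp (-Y ω) * exp m) P :=
    (hE.div_const _).add (hE_neg.mul_const _)
  have hcosh :
      ∫ ω, (exp (Y ω) / exp m + exp (-Y ω) * exp m - 2) ∂P = a / exp m + b * exp m - 2 := by
    rw [integral_sub hsum (integrable_const _), integral_add (hE.div_const _) (hE_neg.mul_const _),
      integral_div, integral_mul_const]
    simp [a, b]
  have hsq : ∀ ω, ((exp (Y ω) + exp (-Y ω)) / 2) ^ 2 =
      (exp (2 * Y ω) + exp (-(2 * Y ω)) - 2) / 4 + 1 := by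
    intro ω
    rw [two_mul, neg_add, exp_add, exp_add, exp_neg]
    field_simp
    ring
  have hG : Integrable (fun ω => exp (2 * Y ω) + exp (-(2 * Y ω)) - 2) P :=
    (hexp.add hexp_neg).sub (integrable_const _)
  have hG' : Integrable (fun ω => (exp (2 * Y ω) + exp (-(2 * Y ω)) - 2) / 4 + 1) P :=
    (hG.div_const 4).add (integrable_const 1)
  have hmean : ∫ ω, (exp (Y ω) + exp (-Y ω)) / 2 ∂P = (a + b) / 2 := by
    rw [integral_div, integral_add hE hE_neg]
  have hmean_sq : ∫ ω, ((exp (Y ω) + exp (-Y ω)) / 2) ^ 2 ∂P =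
      (∫ ω, (exp (2 * Y ω) + exp (-(2 * Y ω)) - 2) ∂P) / 4 + 1 := by
    simp only [hsq]
    rw [integral_add (hG.div_const _) (integrable_const _), integral_div]
    simp
  have hjensen := sq_integral_le_integral_sq (Y := fun ω => (exp (Y ω) + exp (-Y ω)) / 2)
    ((hE.add hE_neg).div_const 2) (by simpa only [hsq] using hG')
  rw [hmean, hmean_sq] at hjensen
  calc ∫ ω, (exp |Y ω - m| - 1 - |Y ω - m|) ∂P
      ≤ ∫ ω, (exp (Y ω) / exp m + exp (-Y ω) * exp m - 2) ∂P := by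
        refine integral_mono (integrable_exp_abs_sub_sub_one_sub_abs hY hexp hexp_neg m)
          (hsum.sub (integrable_const _)) fun ω => ?_
        have h := exp_abs_sub_one_sub_abs_le (Y ω - m)
        rwa [exp_sub, neg_sub, sub_eq_neg_add m, exp_add] at h
    _ = a / exp m + b * exp m - 2 := hcosh
    _ ≤ a * b - 1 := by linarith [div_add_mul_le_one_add_mul (exp_pos m) ha hab]
    _ ≤ ((a + b) / 2) ^ 2 - 1 := by nlinarith [sq_nonneg (a - b)]
    _ ≤ _ := by linarith

theorem lintegral_exp_abs_quarter_log_sub_le {U : Ω → ℝ} (hU : ∀ᵐ ω ∂P, 0 < U ω)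
    (hlog : Integrable (fun ω => log (U ω)) P) (hU₁ : Integrable U P)
    (hU₂ : Integrable (fun ω => (U ω)⁻¹) P) :
    ∫⁻ ω, ENNReal.ofReal (exp |1 / 4 * (log (U ω) - ∫ ω', log (U ω') ∂P)| - 1 -
        |1 / 4 * (log (U ω) - ∫ ω', log (U ω') ∂P)|) ∂P ≤
      ENNReal.ofReal ((∫ ω, (√(U ω) + √(U ω)⁻¹ - 2) ∂P) / 4) := by
  set Y := fun ω => 1 / 4 * log (U ω)
  have hY : Integrable Y P := hlog.const_mul _
  have hYexp : ∀ᵐ ω ∂P, exp (2 * Y ω) = √(U ω) ∧ exp (-(2 * Y ω)) = √(U ω)⁻¹ := by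
    filter_upwards [hU] with ω hω
    simp only [Y, show ∀ t : ℝ, 2 * (1 / 4 * t) = t / 2 from fun t => by ring, ← neg_div,
      ← Real.log_inv]
    exact ⟨exp_log_div_two hω, exp_log_div_two (inv_pos.2 hω)⟩
  have hexp : Integrable (fun ω => exp (2 * Y ω)) P :=
    hU₁.sqrt.congr (hYexp.mono fun _ h => h.1.symm)
  have hexp_neg : Integrable (fun ω => exp (-(2 * Y ω))) P :=
    hU₂.sqrt.congr (hYexp.mono fun _ h => h.2.symm)
  have hcentered : ∀ ω, 1 / 4 * (log (U ω) - ∫ ω', log (U ω') ∂P) = Y ω - ∫ ω', Y ω' ∂P :=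
    fun ω => by simp only [Y, integral_const_mul, mul_sub]
  have h := integral_exp_abs_sub_integral_le hY hexp hexp_neg
  rw [integral_congr_ae (f := fun ω => exp (2 * Y ω) + exp (-(2 * Y ω)) - 2)
    (g := fun ω => √(U ω) + √(U ω)⁻¹ - 2) (hYexp.mono fun ω h => by dsimp only; rw [h.1, h.2])] at h
  simp_rw [hcentered]
  rw [← ofReal_integral_eq_lintegral_ofReal
    (integrable_exp_abs_sub_sub_one_sub_abs hY hexp hexp_neg _)
    (.of_forall fun _ => exp_abs_sub_one_sub_abs_nonneg _)]
  exact ENNReal.ofReal_le_ofReal h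

end Exponential

section SqrtRatio

variable {X : Type*} [MeasurableSpace X] {P : Measure X} [IsFiniteMeasure P] {V : X → ℝ}

lemma integrable_one_sub_sqrt_sq (hV : Integrable V P) :
    Integrable (fun x => (1 - √(V x)) ^ 2) P := by
  refine ((integrable_const 2).add (hV.abs.const_mul 2)).mono'
    ((aestronglyMeasurable_const.sub hV.sqrt.1).pow 2) (.of_forall fun x => ?_)
  rw [Real.norm_of_nonneg (sq_nonneg _), Pi.add_apply]
  have h : √(V x) ^ 2 ≤ |V x| := by
    rcases le_total 0 (V x) with h | h
    · rw [sq_sqrt h, abs_of_nonneg h]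
    · rw [sqrt_eq_zero'.2 h]; simp
  nlinarith [sq_nonneg (1 + √(V x))]

lemma setIntegral_sub_le_sq_mul_setIntegral {c M : ℝ} (hVm : Measurable V) (hV : Integrable V P)
    (hVinv : Integrable (fun x => (V x)⁻¹) P) (hc : 0 < c)
    (hcM : c * ∫ x in V ⁻¹' Set.Ici ((1 + 1 / (2 * c)) ^ 2), V x ∂P ≤
      M * P.real (V ⁻¹' Set.Ici ((1 + 1 / (2 * c)) ^ 2))) :
    ∫ x in V ⁻¹' Set.Ici ((1 + 1 / (2 * c)) ^ 2), (V x - (1 + 1 / (2 * c)) ^ 2) ∂P ≤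
      M ^ 2 * ∫ x in V ⁻¹' Set.Ici ((1 + 1 / (2 * c)) ^ 2), (1 - (√(V x))⁻¹) ^ 2 ∂P := by
  set κ := (1 + 1 / (2 * c)) ^ 2
  set A := V ⁻¹' Set.Ici κ
  have hA : MeasurableSet A := hVm measurableSet_Ici
  have hw : Integrable (fun x => (1 - (√(V x))⁻¹) ^ 2) P := by
    simpa only [sqrt_inv] using integrable_one_sub_sqrt_sq hVinv
  have hκ0 : 0 ≤ κ := sq_nonneg _
  have hchebyshev : P.real A ≤ (2 * c + 1) ^ 2 * ∫ x in A, (1 - (√(V x))⁻¹) ^ 2 ∂P := by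
    rw [← integral_const_mul, ← setIntegral_one_eq_measureReal]
    refine setIntegral_mono_on (integrable_const 1).integrableOn (hw.const_mul _).integrableOn hA
      fun x hx => one_le_sq_mul_one_sub_inv_sq hc ?_
    exact (le_sqrt (by positivity) (hκ0.trans hx)).2 hx
  have h4cκ : (2 * c + 1) ^ 2 = 4 * c * (c * κ) := by simp only [κ]; field_simp; ring
  rw [integral_sub hV.integrableOn (integrable_const _), setIntegral_const, smul_eq_mul,
    ← mul_le_mul_iff_right₀ hc]
  have hexcess : c * (∫ x in A, V x ∂P - P.real A * κ) ≤ (M - c * κ) * P.real A := by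
    linarith
  refine hexcess.trans ?_
  rcases le_total (c * κ) M with hx | hx
  · -- `4 x (M - x) ≤ M²` with `x = c κ`
    calc (M - c * κ) * P.real A
        ≤ (M - c * κ) * ((2 * c + 1) ^ 2 * ∫ x in A, (1 - (√(V x))⁻¹) ^ 2 ∂P) := by gcongr
      _ = c * (4 * (c * κ) * (M - c * κ)) * ∫ x in A, (1 - (√(V x))⁻¹) ^ 2 ∂P := by rw [h4cκ]; ring
      _ ≤ c * M ^ 2 * ∫ x in A, (1 - (√(V x))⁻¹) ^ 2 ∂P := by
        gcongr; nlinarith [sq_nonneg (M - 2 * (c * κ))]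
      _ = _ := by ring
  · have : 0 ≤ c * (M ^ 2 * ∫ x in A, (1 - (√(V x))⁻¹) ^ 2 ∂P) := by positivity
    nlinarith [measureReal_nonneg (μ := P) (s := A)]

lemma integral_inv_sqrt_add_sqrt_sub_two_le_add {κ K : ℝ} (hVm : Measurable V)
    (hV : Integrable V P) (hVinv : Integrable (fun x => (V x)⁻¹) P) (hκ : 0 ≤ κ) (hK : 1 ≤ K)
    (hκK : κ ≤ K ^ 2) :
    ∫ x, ((√(V x))⁻¹ + √(V x) - 2) ∂P ≤
      K * ∫ x, (1 - (√(V x))⁻¹) ^ 2 ∂P + (∫ x in V ⁻¹' Set.Ici κ, (V x - κ) ∂P) / (2 * K) := by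
  have hA : MeasurableSet (V ⁻¹' Set.Ici κ) := hVm measurableSet_Ici
  have hw : Integrable (fun x => (1 - (√(V x))⁻¹) ^ 2) P := by
    simpa only [sqrt_inv] using integrable_one_sub_sqrt_sq hVinv
  have hVκ : Integrable (fun x => (V x - κ) / (2 * K)) P :=
    (hV.sub (integrable_const _)).div_const _
  have hg : Integrable (fun x => (√(V x))⁻¹ + √(V x) - 2) P := by
    simp_rw [← sqrt_inv]
    exact (hVinv.sqrt.add hV.sqrt).sub (integrable_const _)
  rw [← integral_const_mul, ← integral_div, ← integral_indicator hA,
    ← integral_add (hw.const_mul _) ((integrable_indicator_iff hA).2 hVκ.integrableOn)]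
  refine integral_mono hg ((hw.const_mul _).add ((integrable_indicator_iff hA).2 hVκ.integrableOn))
    fun x => ?_
  by_cases hx : κ ≤ V x
  · have hVx : 0 ≤ V x := hκ.trans hx
    have h := inv_add_sub_two_le_of_sq_le (sqrt_nonneg (V x)) hK hκK (by rwa [sq_sqrt hVx])
    rwa [sq_sqrt hVx, ← Set.indicator_of_mem (s := V ⁻¹' Set.Ici κ) hx
      (fun x => (V x - κ) / (2 * K))] at h
  · rw [Set.indicator_of_notMem (by simpa using hx), add_zero]
    refine inv_add_sub_two_le_mul_one_sub_inv_sq (sqrt_nonneg _) ?_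
    rw [sqrt_le_left (by linarith)]
    linarith

theorem integral_inv_sqrt_add_sqrt_sub_two_le {c M : ℝ} (hVm : Measurable V)
    (hV : Integrable V P) (hVinv : Integrable (fun x => (V x)⁻¹) P) (hc : 1 ≤ c) (hM : 0 ≤ M)
    (hcM : c * ∫ x in V ⁻¹' Set.Ici ((1 + 1 / (2 * c)) ^ 2), V x ∂P ≤
      M * P.real (V ⁻¹' Set.Ici ((1 + 1 / (2 * c)) ^ 2))) :
    ∫ x, ((√(V x))⁻¹ + √(V x) - 2) ∂P ≤ (4 + 2 * M) * ∫ x, (1 - (√(V x))⁻¹) ^ 2 ∂P := by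
  have hK : 1 + 1 / (2 * c) ≤ 2 + M := by
    have : 1 / (2 * c) ≤ 1 := by rw [div_le_one (by linarith)]; linarith
    linarith
  have hsplit := integral_inv_sqrt_add_sqrt_sub_two_le_add hVm hV hVinv (sq_nonneg _)
    (by linarith) (pow_le_pow_left₀ (by positivity) hK 2)
  have htail := setIntegral_sub_le_sq_mul_setIntegral hVm hV hVinv (by linarith) hcM
  have hw : ∫ x in V ⁻¹' Set.Ici ((1 + 1 / (2 * c)) ^ 2), (1 - (√(V x))⁻¹) ^ 2 ∂P ≤
      ∫ x, (1 - (√(V x))⁻¹) ^ 2 ∂P :=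
    setIntegral_le_integral
      (by simpa only [sqrt_inv] using integrable_one_sub_sqrt_sq hVinv)
      (.of_forall fun _ => sq_nonneg _)
  have hw₀ : 0 ≤ ∫ x in V ⁻¹' Set.Ici ((1 + 1 / (2 * c)) ^ 2), (1 - (√(V x))⁻¹) ^ 2 ∂P :=
    integral_nonneg fun _ => sq_nonneg _
  have : (∫ x in V ⁻¹' Set.Ici ((1 + 1 / (2 * c)) ^ 2), (V x - (1 + 1 / (2 * c)) ^ 2) ∂P) /
      (2 * (2 + M)) ≤ (2 + M) * ∫ x, (1 - (√(V x))⁻¹) ^ 2 ∂P := by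
    rw [div_le_iff₀ (by positivity)]
    nlinarith
  linarith

end SqrtRatio

section WithDensity

variable {X : Type*} [MeasurableSpace X] {P : Measure X}

lemma ae_pos_withDensity_ofReal (μ : Measure X) {q : X → ℝ} (hq : Measurable q) :
    ∀ᵐ x ∂μ.withDensity (fun x => ENNReal.ofReal (q x)), 0 < q x :=
  (ae_withDensity_iff hq.ennreal_ofReal).2 (.of_forall fun _ h => by simpa using h)

lemma lintegral_withDensity_ofReal_le (μ : Measure X) {q f g : X → ℝ} (hq : Measurable q)
    (h : ∀ x, 0 < q x → q x * f x ≤ g x) :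
    ∫⁻ x, ENNReal.ofReal (f x) ∂μ.withDensity (fun x => ENNReal.ofReal (q x)) ≤
      ∫⁻ x, ENNReal.ofReal (g x) ∂μ := by
  refine (lintegral_withDensity_le_lintegral_mul μ hq.ennreal_ofReal _).trans
    (lintegral_mono fun x => ?_)
  rcases le_or_gt (q x) 0 with hx | hx
  · simp [ENNReal.ofReal_eq_zero.2 hx]
  · rw [Pi.mul_apply, ← ENNReal.ofReal_mul hx.le]
    exact ENNReal.ofReal_le_ofReal (h x hx)

lemma integrable_div_withDensity_ofReal (μ : Measure X) {p q : X → ℝ} (hp : Measurable p)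
    (hq : Measurable q) (hp₀ : ∀ x, 0 ≤ p x) (hfin : ∫⁻ x, ENNReal.ofReal (p x) ∂μ ≠ ∞) :
    Integrable (fun x => p x / q x) (μ.withDensity fun x => ENNReal.ofReal (q x)) := by
  refine ⟨(hp.div hq).aestronglyMeasurable, (hasFiniteIntegral_iff_ofReal ?_).2 ?_⟩
  · filter_upwards [ae_pos_withDensity_ofReal μ hq] with x hx using div_nonneg (hp₀ x) hx.le
  exact (lintegral_withDensity_ofReal_le μ hq fun x hx => (mul_div_cancel₀ _ hx.ne').le).trans_lt
    hfin.lt_top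

lemma mul_setIntegral_le_of_lintegral [IsFiniteMeasure P] {A : Set X} {f : X → ℝ} {c M : ℝ}
    (hf : IntegrableOn f A P) (hfnn : ∀ᵐ x ∂P.restrict A, 0 ≤ f x) (hc : 0 ≤ c) (hM : 0 ≤ M)
    (h : P A = 0 ∨
      ENNReal.ofReal c * ∫⁻ x in A, ENNReal.ofReal (f x) ∂P ≤ ENNReal.ofReal M * P A) :
    c * ∫ x in A, f x ∂P ≤ M * P.real A := by
  rcases h with h | h
  · simp [Measure.restrict_eq_zero.2 h, measureReal_def, h]
  rw [← ofReal_integral_eq_lintegral_ofReal hf hfnn, ← ENNReal.ofReal_mul hc,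
    ← ENNReal.ofReal_toReal (measure_ne_top P A), ← ENNReal.ofReal_mul hM,
    ENNReal.ofReal_le_ofReal_iff (mul_nonneg hM ENNReal.toReal_nonneg)] at h
  exact h

end WithDensity

theorem bernstein_norm_quarter_centered_log_ratio_le_hellinger_general
    {X : Type*} [MeasurableSpace X] (μ : Measure X)
    (p p₀ : X → ℝ) (hp : Measurable p) (hp₀ : Measurable p₀)
    (hpnn : ∀ x, 0 ≤ p x)
    (hpden : ∫⁻ x, ENNReal.ofReal (p x) ∂μ = 1)
    (hp₀den : ∫⁻ x, ENNReal.ofReal (p₀ x) ∂μ = 1)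
    (P₀ : Measure X) (hP₀ : P₀ = μ.withDensity fun x => ENNReal.ofReal (p₀ x))
    (hzero : P₀ {x | p x = 0} = 0)
    (hfin : ∫⁻ x, ENNReal.ofReal (p₀ x / p x) ∂P₀ < ⊤)
    (M : ℝ) (hM : 0 ≤ M)
    (hMbound : ∃ c : ℝ, 1 ≤ c ∧
      (P₀ {x | (1 + 1 / (2 * c)) ^ 2 ≤ p₀ x / p x} = 0 ∨
        ENNReal.ofReal c *
            (∫⁻ x in {x | (1 + 1 / (2 * c)) ^ 2 ≤ p₀ x / p x},
              ENNReal.ofReal (p₀ x / p x) ∂P₀) ≤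
          ENNReal.ofReal M * P₀ {x | (1 + 1 / (2 * c)) ^ 2 ≤ p₀ x / p x}))
    (hint : Integrable (fun x => Real.log (p x / p₀ x)) P₀)
    (m : ℝ) (hm : m = ∫ x, Real.log (p x / p₀ x) ∂P₀) :
    2 * ∫⁻ x, ENNReal.ofReal
          (Real.exp |1 / 4 * (Real.log (p x / p₀ x) - m)| - 1 -
            |1 / 4 * (Real.log (p x / p₀ x) - m)|) ∂P₀ ≤
      ENNReal.ofReal (2 + M) *
        ∫⁻ x, ENNReal.ofReal ((Real.sqrt (p x) - Real.sqrt (p₀ x)) ^ 2) ∂μ := by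
  obtain ⟨c, hc, hcM⟩ := hMbound
  have : IsProbabilityMeasure P₀ :=
    ⟨by rw [hP₀, withDensity_apply _ .univ, Measure.restrict_univ, hp₀den]⟩
  have hpos : ∀ᵐ x ∂P₀, 0 < p x / p₀ x := by
    filter_upwards [measure_eq_zero_iff_ae_notMem.1 hzero, hP₀ ▸ ae_pos_withDensity_ofReal μ hp₀]
      with x hx hx₀
    exact div_pos ((hpnn x).lt_of_ne' hx) hx₀
  have hu : Integrable (fun x => p x / p₀ x) P₀ :=
    hP₀ ▸ integrable_div_withDensity_ofReal μ hp hp₀ hpnn (by simp [hpden])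
  have hv : Integrable (fun x => p₀ x / p x) P₀ := by
    refine ⟨(hp₀.div hp).aestronglyMeasurable, (hasFiniteIntegral_iff_ofReal ?_).2 hfin⟩
    filter_upwards [hpos] with x hx
    exact (inv_pos.2 hx).le.trans_eq (inv_div _ _)
  have hbernstein := lintegral_exp_abs_quarter_log_sub_le hpos hint hu
    (by simpa only [inv_div] using hv)
  have hcore := integral_inv_sqrt_add_sqrt_sub_two_le (V := fun x => p₀ x / p x) (hp₀.div hp) hv
    (by simpa only [inv_div] using hu) hc hM (mul_setIntegral_le_of_lintegral hv.integrableOn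
      (ae_restrict_of_ae (hpos.mono fun x hx => (inv_pos.2 hx).le.trans_eq (inv_div _ _)))
      (by linarith) hM hcM)
  simp only [← hm, inv_div, ← sqrt_inv] at hbernstein hcore
  have hhellinger : ∫⁻ x, ENNReal.ofReal ((1 - √(p x / p₀ x)) ^ 2) ∂P₀ ≤
      ∫⁻ x, ENNReal.ofReal ((√(p x) - √(p₀ x)) ^ 2) ∂μ :=
    hP₀ ▸ lintegral_withDensity_ofReal_le μ hp₀ fun x hx => (mul_one_sub_sqrt_div_sq (p x) hx).le
  calc _ ≤ 2 * ENNReal.ofReal ((∫ x, (√(p x / p₀ x) + √(p₀ x / p x) - 2) ∂P₀) / 4) := by gcongr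
    _ ≤ ENNReal.ofReal (2 + M) * ∫⁻ x, ENNReal.ofReal ((1 - √(p x / p₀ x)) ^ 2) ∂P₀ := by
      rw [← ofReal_integral_eq_lintegral_ofReal (integrable_one_sub_sqrt_sq hu)
          (.of_forall fun _ => sq_nonneg _), ← ENNReal.ofReal_ofNat 2,
        ← ENNReal.ofReal_mul zero_le_two, ← ENNReal.ofReal_mul (by linarith)]
      exact ENNReal.ofReal_le_ofReal (by linarith)
    _ ≤ _ := by gcongr

/-- Under the stated conditions, with `m := ∫ log(p/p₀) dP₀`, the Bernstein-norm bound
`‖(1/4)(log(p/p₀) - m)‖²_{P₀,B} ≤ (2 + M) h(p,p₀)²` holds. -/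
theorem bernstein_norm_quarter_centered_log_ratio_le_hellinger
    {X : Type*} [MeasurableSpace X] (μ : Measure X) [SigmaFinite μ]
    (p p₀ : X → ℝ) (hp : Measurable p) (hp₀ : Measurable p₀)
    (hpnn : ∀ x, 0 ≤ p x) (hp₀nn : ∀ x, 0 ≤ p₀ x)
    (hpden : ∫⁻ x, ENNReal.ofReal (p x) ∂μ = 1)
    (hp₀den : ∫⁻ x, ENNReal.ofReal (p₀ x) ∂μ = 1)
    (P₀ : Measure X) (hP₀ : P₀ = μ.withDensity fun x => ENNReal.ofReal (p₀ x))
    (hzero : P₀ {x | p x = 0} = 0)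
    (hfin : ∫⁻ x, ENNReal.ofReal (p₀ x / p x) ∂P₀ < ⊤)
    (M : ℝ) (hM : 0 ≤ M)
    (hMbound : ∃ c : ℝ, 1 ≤ c ∧
      (P₀ {x | (1 + 1 / (2 * c)) ^ 2 ≤ p₀ x / p x} = 0 ∨
        ENNReal.ofReal c *
            (∫⁻ x in {x | (1 + 1 / (2 * c)) ^ 2 ≤ p₀ x / p x},
              ENNReal.ofReal (p₀ x / p x) ∂P₀) ≤
          ENNReal.ofReal M * P₀ {x | (1 + 1 / (2 * c)) ^ 2 ≤ p₀ x / p x}))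
    (hint : Integrable (fun x => Real.log (p x / p₀ x)) P₀)
    (m : ℝ) (hm : m = ∫ x, Real.log (p x / p₀ x) ∂P₀) :
    2 * ∫⁻ x, ENNReal.ofReal
          (Real.exp |1 / 4 * (Real.log (p x / p₀ x) - m)| - 1 -
            |1 / 4 * (Real.log (p x / p₀ x) - m)|) ∂P₀ ≤
      ENNReal.ofReal (2 + M) *
        ∫⁻ x, ENNReal.ofReal ((Real.sqrt (p x) - Real.sqrt (p₀ x)) ^ 2) ∂μ :=
  bernstein_norm_quarter_centered_log_ratio_le_hellinger_general μ p p₀ hp hp₀ hpnn hpden hp₀den P₀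
    hP₀ hzero hfin M hM hMbound hint m hm
end

section
/- Let (X, 𝒜) be a measurable space, μ a σ-finite measure, and p, q measurable probability densities with respect to μ. Define D* := p/(p+q) on {p+q > 0} (set arbitrarily in (0,1) elsewhere). Then for every measurable D : X → (0,1), ∫ p log D dμ + ∫ q log(1−D) dμ ≤ ∫ p log D* dμ + ∫ q log(1−D*) dμ, where both sides are interpreted as extended real numbers in [−∞, 0]. -/
open MeasureTheory Real ENNReal

lemma gibbs_aux (a s d : ℝ) (ha : 0 ≤ a) (hs : 0 < s) (hd : 0 < d) :
    a * Real.log d ≤ a * Real.log (a / s) + (d * s - a) := by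
  rcases eq_or_lt_of_le ha with h | h
  · simp [← h]
    positivity
  · have h1 : 0 < d * s / a := by positivity
    have h2 : Real.log (d * s / a) ≤ d * s / a - 1 := Real.log_le_sub_one_of_pos h1
    have h3 : Real.log (d * s / a) = Real.log d - Real.log (a / s) := by
      rw [Real.log_div (by positivity) (ne_of_gt h), Real.log_mul (ne_of_gt hd) (ne_of_gt hs),
        Real.log_div (ne_of_gt h) (ne_of_gt hs)]
      ring
    have h4 : a * Real.log (d * s / a) ≤ d * s - a := by
      calc a * Real.log (d * s / a) ≤ a * (d * s / a - 1) := by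
            exact mul_le_mul_of_nonneg_left h2 ha
        _ = d * s - a := by field_simp
    nlinarith [h4, h3]

/-- Population optimality of the Bayes classifier `D* = p/(p+q)` for the cross-entropy
objective: for every measurable `D : X → (0,1)`,
`∫ p log D dμ + ∫ q log(1-D) dμ ≤ ∫ p log D* dμ + ∫ q log(1-D*) dμ`,
both sides interpreted in `[-∞, 0]` (stated equivalently via the lower integrals of the
negated, nonnegative integrands). -/
theorem bayes_classifier_optimal
    {X : Type*} [MeasurableSpace X] (μ : Measure X) [SigmaFinite μ]
    (p q : X → ℝ) (hp : Measurable p) (hq : Measurable q)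
    (hpnn : ∀ x, 0 ≤ p x) (hqnn : ∀ x, 0 ≤ q x)
    (hpden : ∫⁻ x, ENNReal.ofReal (p x) ∂μ = 1)
    (hqden : ∫⁻ x, ENNReal.ofReal (q x) ∂μ = 1)
    (Dstar : X → ℝ) (hDstar : Measurable Dstar)
    (hDstar_def : ∀ x, 0 < p x + q x → Dstar x = p x / (p x + q x))
    (hDstar_mem : ∀ x, ¬0 < p x + q x → 0 < Dstar x ∧ Dstar x < 1)
    (D : X → ℝ) (hD : Measurable D) (hD_mem : ∀ x, 0 < D x ∧ D x < 1) :
    (∫⁻ x, ENNReal.ofReal (-(p x * Real.log (Dstar x))) ∂μ) +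
        (∫⁻ x, ENNReal.ofReal (-(q x * Real.log (1 - Dstar x))) ∂μ) ≤
      (∫⁻ x, ENNReal.ofReal (-(p x * Real.log (D x))) ∂μ) +
        (∫⁻ x, ENNReal.ofReal (-(q x * Real.log (1 - D x))) ∂μ) := by
  have m1 : Measurable fun x => ENNReal.ofReal (-(p x * Real.log (Dstar x))) :=
    ((hp.mul (Real.measurable_log.comp hDstar)).neg).ennreal_ofReal
  have m2 : Measurable fun x => ENNReal.ofReal (-(q x * Real.log (1 - Dstar x))) :=
    ((hq.mul (Real.measurable_log.comp (measurable_const.sub hDstar))).neg).ennreal_ofReal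
  have m3 : Measurable fun x => ENNReal.ofReal (-(p x * Real.log (D x))) :=
    ((hp.mul (Real.measurable_log.comp hD)).neg).ennreal_ofReal
  rw [← lintegral_add_left m1, ← lintegral_add_left m3]
  apply lintegral_mono
  intro x
  dsimp only
  -- Bounds on Dstar
  have hDs0 : 0 ≤ Dstar x := by
    by_cases h : 0 < p x + q x
    · rw [hDstar_def x h]; exact div_nonneg (hpnn x) h.le
    · exact (hDstar_mem x h).1.le
  have hDs1 : Dstar x ≤ 1 := by
    by_cases h : 0 < p x + q x
    · rw [hDstar_def x h]
      rw [div_le_one h]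
      linarith [hqnn x]
    · exact (hDstar_mem x h).2.le
  have hlogDs : Real.log (Dstar x) ≤ 0 := Real.log_nonpos hDs0 hDs1
  have hlog1Ds : Real.log (1 - Dstar x) ≤ 0 := Real.log_nonpos (by linarith) (by linarith)
  have n1 : 0 ≤ -(p x * Real.log (Dstar x)) := by nlinarith [hpnn x]
  have n2 : 0 ≤ -(q x * Real.log (1 - Dstar x)) := by nlinarith [hqnn x]
  have n3 : 0 ≤ -(p x * Real.log (D x)) := by
    have := Real.log_nonpos (hD_mem x).1.le (hD_mem x).2.le
    nlinarith [hpnn x]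
  have n4 : 0 ≤ -(q x * Real.log (1 - D x)) := by
    have := Real.log_nonpos (by linarith [(hD_mem x).2] : (0:ℝ) ≤ 1 - D x)
      (by linarith [(hD_mem x).1] : 1 - D x ≤ 1)
    nlinarith [hqnn x]
  rw [← ENNReal.ofReal_add n1 n2, ← ENNReal.ofReal_add n3 n4]
  apply ENNReal.ofReal_le_ofReal
  -- Core pointwise inequality
  have key : p x * Real.log (D x) + q x * Real.log (1 - D x) ≤
      p x * Real.log (Dstar x) + q x * Real.log (1 - Dstar x) := by
    by_cases h : 0 < p x + q x
    · set s := p x + q x with hs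
      have hp0 : p x = 0 ∨ 0 < p x := (hpnn x).eq_or_lt.imp Eq.symm id
      have hds : Dstar x = p x / s := hDstar_def x h
      have h1ds : 1 - Dstar x = q x / s := by
        rw [hds]; field_simp; ring
      have g1 : p x * Real.log (D x) ≤ p x * Real.log (p x / s) + (D x * s - p x) :=
        gibbs_aux _ _ _ (hpnn x) h (hD_mem x).1
      have g2 : q x * Real.log (1 - D x) ≤ q x * Real.log (q x / s) + ((1 - D x) * s - q x) :=
        gibbs_aux _ _ _ (hqnn x) h (by linarith [(hD_mem x).2])
      rw [hds, show (1:ℝ) - p x / s = q x / s from by field_simp; linarith [hs]]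
      nlinarith [g1, g2]
    · have hp0 : p x = 0 := le_antisymm (by push_neg at h; nlinarith [hqnn x]) (hpnn x)
      have hq0 : q x = 0 := le_antisymm (by push_neg at h; nlinarith [hpnn x]) (hqnn x)
      simp [hp0, hq0]
  linarith
end

section
/- For every measurable D : X → (0,1], one has ∫ (√(D/D_θ) − 1)² dP₀ ≤ ∫ (√D − √(D_θ))² d(P₀ + P_θ) = h_θ(D, D_θ)². -/
open MeasureTheory Real ENNReal

/-- For every measurable `D : X → (0,1]`,
`∫ (√(D/D_θ) - 1)² dP₀ ≤ ∫ (√D - √D_θ)² d(P₀ + P_θ) = h_θ(D, D_θ)²`. -/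
theorem sq_sqrt_ratio_le_hellinger_type
    {X : Type*} [MeasurableSpace X] (μ : Measure X) [SigmaFinite μ]
    (p₀ pθ : X → ℝ) (hp₀ : Measurable p₀) (hpθ : Measurable pθ)
    (hp₀nn : ∀ x, 0 ≤ p₀ x) (hpθnn : ∀ x, 0 ≤ pθ x)
    (hp₀den : ∫⁻ x, ENNReal.ofReal (p₀ x) ∂μ = 1)
    (hpθden : ∫⁻ x, ENNReal.ofReal (pθ x) ∂μ = 1)
    (P₀ Pθ : Measure X)
    (hP₀ : P₀ = μ.withDensity fun x => ENNReal.ofReal (p₀ x))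
    (hPθ : Pθ = μ.withDensity fun x => ENNReal.ofReal (pθ x))
    (Dθ : X → ℝ) (hDθ : Measurable Dθ)
    (hDθ_def : ∀ x, 0 < p₀ x + pθ x → Dθ x = p₀ x / (p₀ x + pθ x))
    (D : X → ℝ) (hD : Measurable D) (hD_mem : ∀ x, 0 < D x ∧ D x ≤ 1) :
    ∫⁻ x, ENNReal.ofReal ((Real.sqrt (D x / Dθ x) - 1) ^ 2) ∂P₀ ≤
      ∫⁻ x, ENNReal.ofReal ((Real.sqrt (D x) - Real.sqrt (Dθ x)) ^ 2) ∂(P₀ + Pθ) := by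
  subst hP₀ hPθ
  rw [← withDensity_add_left (by fun_prop : Measurable fun x => ENNReal.ofReal (p₀ x))]
  rw [lintegral_withDensity_eq_lintegral_mul _ (by fun_prop) (by fun_prop),
      lintegral_withDensity_eq_lintegral_mul _ (by fun_prop) (by fun_prop)]
  apply lintegral_mono
  intro x
  simp only [Pi.mul_apply, Pi.add_apply]
  rcases eq_or_lt_of_le (hp₀nn x) with h0 | h0
  · simp [← h0]
  · have hs : 0 < p₀ x + pθ x := by linarith [hpθnn x]
    have hDθx : Dθ x = p₀ x / (p₀ x + pθ x) := hDθ_def x hs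
    have hDθpos : 0 < Dθ x := by rw [hDθx]; positivity
    have key : p₀ x * (Real.sqrt (D x / Dθ x) - 1) ^ 2
        = (p₀ x + pθ x) * (Real.sqrt (D x) - Real.sqrt (Dθ x)) ^ 2 := by
      have hD0 : 0 ≤ D x := (hD_mem x).1.le
      have hb : 0 < Real.sqrt (Dθ x) := Real.sqrt_pos.mpr hDθpos
      have hb2 : Real.sqrt (Dθ x) ^ 2 = Dθ x := Real.sq_sqrt hDθpos.le
      have hp : p₀ x = Dθ x * (p₀ x + pθ x) := by
        rw [hDθx]; field_simp
      have expand : Real.sqrt (Dθ x) * (Real.sqrt (D x) / Real.sqrt (Dθ x) - 1)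
          = Real.sqrt (D x) - Real.sqrt (Dθ x) := by
        field_simp
      rw [Real.sqrt_div hD0]
      calc p₀ x * (Real.sqrt (D x) / Real.sqrt (Dθ x) - 1) ^ 2
          = (p₀ x + pθ x) * (Real.sqrt (Dθ x) * (Real.sqrt (D x) / Real.sqrt (Dθ x) - 1)) ^ 2 := by
            rw [mul_pow, hb2]; linear_combination ((Real.sqrt (D x) / Real.sqrt (Dθ x) - 1) ^ 2) * hp
        _ = (p₀ x + pθ x) * (Real.sqrt (D x) - Real.sqrt (Dθ x)) ^ 2 := by rw [expand]
    rw [← ENNReal.ofReal_mul (hp₀nn x), ← ENNReal.ofReal_add (hp₀nn x) (hpθnn x),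
        ← ENNReal.ofReal_mul hs.le, key]
end

section
/- Let D : X → (0,1) be measurable, let δ ≥ 0 and M ≥ 0, and assume h_θ(D, D_θ)² ≤ δ², ∫ (D_θ/D) dP₀ ≤ M, and that log(D/D_θ) is P₀-integrable. Then |∫ log(D/D_θ) dP₀| ≤ 2 · max(1, √M) · δ. -/
open MeasureTheory Real ENNReal

/-!
With `s = √D` and `t = √D_θ`, concavity of `log` gives `log (D / D_θ) ≤ 2 (s - t) / t` and
`log (D_θ / D) ≤ 2 (t - s) / s = 2 ((t - s) / t) (t / s)`. Since `dP₀ = D_θ d(P₀ + P_θ)`, the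
weighted Hellinger integral `∫ (s - t)² / t² dP₀` is at most `h_θ(D, D_θ)² ≤ δ²`, so by
Cauchy–Schwarz the positive part of `log (D / D_θ)` has integral at most `2δ` and the negative
part at most `2δ√M`.
-/

namespace Real

lemma log_div_le_two_mul_abs_sqrt_sub_div {a b : ℝ} (ha : 0 < a) (hb : 0 < b) :
    log (a / b) ≤ 2 * (|√a - √b| / √b) := by
  have hsb : 0 < √b := sqrt_pos.mpr hb
  calc log (a / b) = 2 * log (√a / √b) := by
        rw [← Nat.cast_ofNat, ← log_pow, div_pow, sq_sqrt ha.le, sq_sqrt hb.le]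
    _ ≤ 2 * (√a / √b - 1) := by
        gcongr; exact log_le_sub_one_of_pos (div_pos (sqrt_pos.mpr ha) hsb)
    _ = 2 * ((√a - √b) / √b) := by rw [sub_div, div_self hsb.ne']
    _ ≤ 2 * (|√a - √b| / √b) := by gcongr; exact le_abs_self _

lemma neg_log_div_le_two_mul_abs_sqrt_sub_div_mul {a b : ℝ} (ha : 0 < a) (hb : 0 < b) :
    -log (a / b) ≤ 2 * (|√a - √b| / √b * (√b / √a)) := by
  rw [← log_inv, inv_div, div_mul_div_cancel₀ (sqrt_pos.mpr hb).ne', abs_sub_comm]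
  exact log_div_le_two_mul_abs_sqrt_sub_div hb ha

end Real

section

variable {X : Type*} [MeasurableSpace X] {μ : Measure X}

lemma ENNReal.lintegral_mul_le_of_lintegral_sq_le {f g : X → ℝ≥0∞} (hf : AEMeasurable f μ)
    (hg : AEMeasurable g μ) {a b : ℝ≥0∞} (hfa : ∫⁻ x, f x ^ 2 ∂μ ≤ a ^ 2)
    (hgb : ∫⁻ x, g x ^ 2 ∂μ ≤ b ^ 2) :
    ∫⁻ x, f x * g x ∂μ ≤ a * b := by
  have sqrt_sq (c : ℝ≥0∞) : (c ^ 2) ^ (1 / 2 : ℝ) = c := by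
    rw [← rpow_two, ← rpow_mul]; norm_num
  calc ∫⁻ x, f x * g x ∂μ
      ≤ (∫⁻ x, f x ^ (2 : ℝ) ∂μ) ^ (1 / 2 : ℝ) * (∫⁻ x, g x ^ (2 : ℝ) ∂μ) ^ (1 / 2 : ℝ) :=
        lintegral_mul_le_Lp_mul_Lq μ .two_two hf hg
    _ ≤ (a ^ 2) ^ (1 / 2 : ℝ) * (b ^ 2) ^ (1 / 2 : ℝ) := by
        simp only [rpow_two]; gcongr
    _ = a * b := by rw [sqrt_sq, sqrt_sq]

lemma abs_integral_le_max_of_lintegral_ofReal_le {f : X → ℝ} (hf : Integrable f μ) {a b : ℝ}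
    (ha : 0 ≤ a) (hb : 0 ≤ b) (hpos : ∫⁻ x, .ofReal (f x) ∂μ ≤ .ofReal a)
    (hneg : ∫⁻ x, .ofReal (-f x) ∂μ ≤ .ofReal b) :
    |∫ x, f x ∂μ| ≤ max a b := by
  rw [integral_eq_lintegral_pos_part_sub_lintegral_neg_part hf, abs_le]
  have := toReal_le_of_le_ofReal ha hpos
  have := toReal_le_of_le_ofReal hb hneg
  constructor <;> linarith [le_max_left a b, le_max_right a b,
    toReal_nonneg (a := ∫⁻ x, .ofReal (f x) ∂μ), toReal_nonneg (a := ∫⁻ x, .ofReal (-f x) ∂μ)]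

section LogRatio

variable {f g : X → ℝ} {δ M : ℝ}

lemma lintegral_sq_ofReal_abs_sqrt_sub_div_sqrt (hg_pos : ∀ᵐ x ∂μ, 0 < g x) :
    ∫⁻ x, .ofReal (|√(f x) - √(g x)| / √(g x)) ^ 2 ∂μ =
      ∫⁻ x, .ofReal ((√(f x) - √(g x)) ^ 2 / g x) ∂μ := by
  refine lintegral_congr_ae ?_
  filter_upwards [hg_pos] with x hx
  rw [← ofReal_pow (by positivity), div_pow, sq_abs, sq_sqrt hx.le]

lemma lintegral_ofReal_log_div_le [IsProbabilityMeasure μ] (hf : AEMeasurable f μ)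
    (hg : AEMeasurable g μ) (hf_pos : ∀ᵐ x ∂μ, 0 < f x) (hg_pos : ∀ᵐ x ∂μ, 0 < g x)
    (hδ : 0 ≤ δ) (hchi : ∫⁻ x, .ofReal ((√(f x) - √(g x)) ^ 2 / g x) ∂μ ≤ .ofReal (δ ^ 2)) :
    ∫⁻ x, .ofReal (log (f x / g x)) ∂μ ≤ .ofReal (2 * δ) :=
  calc ∫⁻ x, .ofReal (log (f x / g x)) ∂μ
      ≤ ∫⁻ x, 2 * (.ofReal (|√(f x) - √(g x)| / √(g x)) * 1) ∂μ := by
        refine lintegral_mono_ae ?_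
        filter_upwards [hf_pos, hg_pos] with x hfx hgx
        rw [mul_one, ← ofReal_ofNat 2, ← ofReal_mul zero_le_two]
        exact ofReal_le_ofReal (log_div_le_two_mul_abs_sqrt_sub_div hfx hgx)
    _ = 2 * ∫⁻ x, .ofReal (|√(f x) - √(g x)| / √(g x)) * 1 ∂μ :=
        lintegral_const_mul' _ _ ofNat_ne_top
    _ ≤ 2 * (.ofReal δ * 1) := by
        gcongr
        refine lintegral_mul_le_of_lintegral_sq_le (by fun_prop) aemeasurable_const ?_ (by simp)
        rwa [lintegral_sq_ofReal_abs_sqrt_sub_div_sqrt hg_pos, ← ofReal_pow hδ]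
    _ = .ofReal (2 * δ) := by rw [mul_one, ofReal_mul zero_le_two, ofReal_ofNat]

lemma lintegral_ofReal_neg_log_div_le (hf : AEMeasurable f μ) (hg : AEMeasurable g μ)
    (hf_pos : ∀ᵐ x ∂μ, 0 < f x) (hg_pos : ∀ᵐ x ∂μ, 0 < g x) (hδ : 0 ≤ δ) (hM : 0 ≤ M)
    (hchi : ∫⁻ x, .ofReal ((√(f x) - √(g x)) ^ 2 / g x) ∂μ ≤ .ofReal (δ ^ 2))
    (hratio : ∫⁻ x, .ofReal (g x / f x) ∂μ ≤ .ofReal M) :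
    ∫⁻ x, .ofReal (-log (f x / g x)) ∂μ ≤ .ofReal (2 * δ * √M) := by
  have hratio_sq : ∫⁻ x, .ofReal (√(g x) / √(f x)) ^ 2 ∂μ ≤ .ofReal √M ^ 2 := by
    rw [← ofReal_pow (sqrt_nonneg M), sq_sqrt hM]
    refine le_of_eq_of_le (lintegral_congr_ae ?_) hratio
    filter_upwards [hf_pos, hg_pos] with x hfx hgx
    rw [← ofReal_pow (by positivity), div_pow, sq_sqrt hfx.le, sq_sqrt hgx.le]
  calc ∫⁻ x, .ofReal (-log (f x / g x)) ∂μ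
      ≤ ∫⁻ x, 2 * (.ofReal (|√(f x) - √(g x)| / √(g x)) * .ofReal (√(g x) / √(f x))) ∂μ := by
        refine lintegral_mono_ae ?_
        filter_upwards [hf_pos, hg_pos] with x hfx hgx
        rw [← ofReal_mul (by positivity), ← ofReal_ofNat 2, ← ofReal_mul zero_le_two]
        exact ofReal_le_ofReal (neg_log_div_le_two_mul_abs_sqrt_sub_div_mul hfx hgx)
    _ = 2 * ∫⁻ x, .ofReal (|√(f x) - √(g x)| / √(g x)) * .ofReal (√(g x) / √(f x)) ∂μ :=
        lintegral_const_mul' _ _ ofNat_ne_top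
    _ ≤ 2 * (.ofReal δ * .ofReal √M) := by
        gcongr
        refine lintegral_mul_le_of_lintegral_sq_le (by fun_prop) (by fun_prop) ?_ hratio_sq
        rwa [lintegral_sq_ofReal_abs_sqrt_sub_div_sqrt hg_pos, ← ofReal_pow hδ]
    _ = .ofReal (2 * δ * √M) := by
        rw [ofReal_mul (by positivity), ofReal_mul zero_le_two, ofReal_ofNat, mul_assoc]

theorem abs_integral_log_div_le [IsProbabilityMeasure μ] (hf : AEMeasurable f μ)
    (hg : AEMeasurable g μ) (hf_pos : ∀ᵐ x ∂μ, 0 < f x) (hg_pos : ∀ᵐ x ∂μ, 0 < g x)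
    (hδ : 0 ≤ δ) (hM : 0 ≤ M)
    (hchi : ∫⁻ x, .ofReal ((√(f x) - √(g x)) ^ 2 / g x) ∂μ ≤ .ofReal (δ ^ 2))
    (hratio : ∫⁻ x, .ofReal (g x / f x) ∂μ ≤ .ofReal M)
    (hint : Integrable (fun x ↦ log (f x / g x)) μ) :
    |∫ x, log (f x / g x) ∂μ| ≤ 2 * max 1 √M * δ :=
  calc |∫ x, log (f x / g x) ∂μ| ≤ max (2 * δ) (2 * δ * √M) :=
        abs_integral_le_max_of_lintegral_ofReal_le hint (by positivity) (by positivity)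
          (lintegral_ofReal_log_div_le hf hg hf_pos hg_pos hδ hchi)
          (lintegral_ofReal_neg_log_div_le hf hg hf_pos hg_pos hδ hM hchi hratio)
    _ = 2 * max 1 √M * δ := by
        nth_rw 1 [← mul_one (2 * δ)]
        rw [← mul_max_of_nonneg _ _ (by positivity : (0 : ℝ) ≤ 2 * δ)]
        ring

end LogRatio

lemma lintegral_div_discriminator_le {p q d g : X → ℝ} (hp : Measurable p) (hq : Measurable q)
    (hg : Measurable g) (hp_nn : ∀ x, 0 ≤ p x) (hq_nn : ∀ x, 0 ≤ q x)
    (hd : ∀ x, 0 < p x + q x → d x = p x / (p x + q x)) :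
    ∫⁻ x, .ofReal (g x / d x) ∂μ.withDensity (fun x ↦ .ofReal (p x)) ≤
      ∫⁻ x, .ofReal (g x) ∂(μ.withDensity (fun x ↦ .ofReal (p x)) +
        μ.withDensity (fun x ↦ .ofReal (q x))) := by
  rw [lintegral_add_measure, lintegral_withDensity_eq_lintegral_mul _ hp.ennreal_ofReal
    hg.ennreal_ofReal, lintegral_withDensity_eq_lintegral_mul _ hq.ennreal_ofReal
    hg.ennreal_ofReal, ← lintegral_add_left (hp.ennreal_ofReal.mul hg.ennreal_ofReal)]
  refine (lintegral_withDensity_le_lintegral_mul _ hp.ennreal_ofReal _).trans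
    (lintegral_mono fun x ↦ ?_)
  simp only [Pi.mul_apply]
  rcases (hp_nn x).eq_or_lt with hx | hx
  · simp [← hx]
  have hpq : 0 < p x + q x := by linarith [hq_nn x]
  rw [← add_mul, ← ofReal_add (hp_nn x) (hq_nn x), ← ofReal_mul (hp_nn x),
    ← ofReal_mul hpq.le, hd x hpq]
  exact (congrArg ENNReal.ofReal (by field_simp)).le

lemma ae_withDensity_ofReal_pos_s11 {p : X → ℝ} (hp : Measurable p) :
    ∀ᵐ x ∂μ.withDensity (fun x ↦ .ofReal (p x)), 0 < p x :=
  (ae_withDensity_iff hp.ennreal_ofReal).mpr <| ae_of_all _ fun _ h ↦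
    ENNReal.ofReal_pos.mp (pos_iff_ne_zero.mpr h)

end

theorem abs_integral_log_ratio_discriminator_le_general
    {X : Type*} [MeasurableSpace X] (μ : Measure X)
    (p₀ pθ : X → ℝ) (hp₀ : Measurable p₀) (hpθ : Measurable pθ)
    (hp₀nn : ∀ x, 0 ≤ p₀ x) (hpθnn : ∀ x, 0 ≤ pθ x)
    (hp₀den : ∫⁻ x, ENNReal.ofReal (p₀ x) ∂μ = 1)
    (P₀ Pθ : Measure X)
    (hP₀ : P₀ = μ.withDensity fun x => ENNReal.ofReal (p₀ x))
    (hPθ : Pθ = μ.withDensity fun x => ENNReal.ofReal (pθ x))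
    (Dθ : X → ℝ) (hDθ : Measurable Dθ)
    (hDθ_def : ∀ x, 0 < p₀ x + pθ x → Dθ x = p₀ x / (p₀ x + pθ x))
    (D : X → ℝ) (hD : Measurable D) (hD_mem : ∀ x, 0 < D x ∧ D x < 1)
    (δ M : ℝ) (hδ : 0 ≤ δ) (hM : 0 ≤ M)
    (hhel : ∫⁻ x, ENNReal.ofReal ((Real.sqrt (D x) - Real.sqrt (Dθ x)) ^ 2) ∂(P₀ + Pθ) ≤
      ENNReal.ofReal (δ ^ 2))
    (hratio : ∫⁻ x, ENNReal.ofReal (Dθ x / D x) ∂P₀ ≤ ENNReal.ofReal M)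
    (hint : Integrable (fun x => Real.log (D x / Dθ x)) P₀) :
    |∫ x, Real.log (D x / Dθ x) ∂P₀| ≤ 2 * max 1 (Real.sqrt M) * δ := by
  subst hP₀ hPθ
  have : IsProbabilityMeasure (μ.withDensity fun x ↦ .ofReal (p₀ x)) :=
    ⟨by rw [withDensity_apply _ .univ, setLIntegral_univ, hp₀den]⟩
  have hDθ_pos : ∀ᵐ x ∂μ.withDensity (fun x ↦ .ofReal (p₀ x)), 0 < Dθ x := by
    filter_upwards [ae_withDensity_ofReal_pos_s11 hp₀] with x hx
    have hsum : 0 < p₀ x + pθ x := by linarith [hpθnn x]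
    rw [hDθ_def x hsum]
    exact div_pos hx hsum
  have hchi :=
    (lintegral_div_discriminator_le hp₀ hpθ (by fun_prop) hp₀nn hpθnn hDθ_def).trans hhel
  exact abs_integral_log_div_le hD.aemeasurable hDθ.aemeasurable
    (ae_of_all _ fun x ↦ (hD_mem x).1) hDθ_pos hδ hM hchi hratio hint

/-- If `h_θ(D, D_θ)² ≤ δ²`, `∫ (D_θ/D) dP₀ ≤ M` and `log(D/D_θ)` is `P₀`-integrable,
then `|∫ log(D/D_θ) dP₀| ≤ 2 max(1, √M) δ`. -/
theorem abs_integral_log_ratio_discriminator_le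
    {X : Type*} [MeasurableSpace X] (μ : Measure X) [SigmaFinite μ]
    (p₀ pθ : X → ℝ) (hp₀ : Measurable p₀) (hpθ : Measurable pθ)
    (hp₀nn : ∀ x, 0 ≤ p₀ x) (hpθnn : ∀ x, 0 ≤ pθ x)
    (hp₀den : ∫⁻ x, ENNReal.ofReal (p₀ x) ∂μ = 1)
    (hpθden : ∫⁻ x, ENNReal.ofReal (pθ x) ∂μ = 1)
    (P₀ Pθ : Measure X)
    (hP₀ : P₀ = μ.withDensity fun x => ENNReal.ofReal (p₀ x))
    (hPθ : Pθ = μ.withDensity fun x => ENNReal.ofReal (pθ x))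
    (Dθ : X → ℝ) (hDθ : Measurable Dθ)
    (hDθ_def : ∀ x, 0 < p₀ x + pθ x → Dθ x = p₀ x / (p₀ x + pθ x))
    (D : X → ℝ) (hD : Measurable D) (hD_mem : ∀ x, 0 < D x ∧ D x < 1)
    (δ M : ℝ) (hδ : 0 ≤ δ) (hM : 0 ≤ M)
    (hhel : ∫⁻ x, ENNReal.ofReal ((Real.sqrt (D x) - Real.sqrt (Dθ x)) ^ 2) ∂(P₀ + Pθ) ≤
      ENNReal.ofReal (δ ^ 2))
    (hratio : ∫⁻ x, ENNReal.ofReal (Dθ x / D x) ∂P₀ ≤ ENNReal.ofReal M)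
    (hint : Integrable (fun x => Real.log (D x / Dθ x)) P₀) :
    |∫ x, Real.log (D x / Dθ x) ∂P₀| ≤ 2 * max 1 (Real.sqrt M) * δ :=
  abs_integral_log_ratio_discriminator_le_general μ p₀ pθ hp₀ hpθ hp₀nn hpθnn hp₀den P₀ Pθ hP₀ hPθ
    Dθ hDθ hDθ_def D hD hD_mem δ M hδ hM hhel hratio hint
end

section
/- Let D : X → (0,1) be measurable and let M ≥ 0 satisfy ∫_{A} (D_θ/D) dP₀ ≤ M · P₀(A) where A := {D_θ/D ≥ 25/16}. Then the Bernstein norm bound ‖(1/2) log(D/D_θ)‖²_{P₀,B} ≤ 2(1 + M) · h_θ(D, D_θ)² holds, i.e., 2 ∫ (e^{|(1/2)log(D/D_θ)|} − 1 − |(1/2)log(D/D_θ)|) dP₀ ≤ 2(1+M) ∫ (√D − √(D_θ))² d(P₀ + P_θ). -/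
/-!
Write `r = D / D_θ` and `φ(t) = e^{|t|} - 1 - |t|`, so that the integrand on the left is
`φ(log √r)`. On `{p₀ > 0}` the measure `P₀` is `D_θ · (P₀ + P_θ)`, and
`D_θ (√r - 1)² = (√D - √D_θ)²`; hence it suffices to bound `∫ φ(log √r) dP₀` by
`(1 + M) ∫ (√r - 1)² dP₀`.

Off the tail `A = {√r ≤ 4/5}` one has `φ(log √r) ≤ (√r - 1)²` pointwise, by
`log w ≥ 2(w - 1)/(w + 1)`. On `A` the pointwise inequality
`φ(log √r) + (1 + M)/25 ≤ (1 + M)(√r - 1)² + (1 + M)/(25 M) · r⁻¹` holds: after multiplying by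
`25 M r` it says that a quadratic in `M` is nonnegative for `M ≥ 0`, which follows from AM-GM on
its outer coefficients. Integrating over `A` and using `∫_A r⁻¹ dP₀ ≤ M P₀(A)` cancels the
constants.
-/

open MeasureTheory Real ENNReal

theorem two_mul_sub_one_div_add_one_le_log {w : ℝ} (hw : 1 ≤ w) :
    2 * (w - 1) / (w + 1) ≤ log w := by
  rcases hw.eq_or_lt with rfl | hw
  · simp
  have hs := hasSum_log_one_add_inv (inv_pos.2 (sub_pos.2 hw))
  rw [inv_inv, add_sub_cancel] at hs
  refine le_of_eq_of_le ?_ (le_hasSum hs 0 fun _ _ => by positivity)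
  have h₁ : w - 1 ≠ 0 := (sub_pos.2 hw).ne'
  have h₂ : w + 1 ≠ 0 := by linarith
  have h : 2 * (w - 1)⁻¹ + 1 = (w + 1) / (w - 1) := by
    field_simp
    ring
  simp only [h, Nat.cast_zero, mul_zero, zero_add, pow_one, one_div_div, div_one]
  ring

noncomputable def bernsteinIntegrand (t : ℝ) : ℝ := exp |t| - 1 - |t|

theorem bernsteinIntegrand_nonneg (t : ℝ) : 0 ≤ bernsteinIntegrand t := by
  have := add_one_le_exp |t|
  rw [bernsteinIntegrand]
  linarith

theorem bernsteinIntegrand_log_inv (y : ℝ) :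
    bernsteinIntegrand (log y⁻¹) = bernsteinIntegrand (log y) := by
  rw [bernsteinIntegrand, bernsteinIntegrand, Real.log_inv, abs_neg]

theorem bernsteinIntegrand_log_le {w : ℝ} (hw : 1 ≤ w) :
    bernsteinIntegrand (log w) ≤ (w - 1) ^ 2 / (w + 1) := by
  have hlog := two_mul_sub_one_div_add_one_le_log hw
  have h : (w - 1) ^ 2 / (w + 1) = w - 1 - 2 * (w - 1) / (w + 1) := by
    field_simp
    ring
  rw [bernsteinIntegrand, abs_of_nonneg (log_nonneg hw), Real.exp_log (by linarith), h]
  linarith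

theorem bernsteinIntegrand_log_le_of_le_one {y : ℝ} (hy₀ : 0 < y) (hy₁ : y ≤ 1) :
    bernsteinIntegrand (log y) ≤ (1 - y) ^ 2 / (y * (1 + y)) := by
  rw [← bernsteinIntegrand_log_inv]
  convert bernsteinIntegrand_log_le ((one_le_inv₀ hy₀).2 hy₁) using 1
  field_simp

theorem bernsteinIntegrand_log_le_sq {y : ℝ} (hy : 4 / 5 ≤ y) :
    bernsteinIntegrand (log y) ≤ (y - 1) ^ 2 := by
  rcases le_total 1 y with h | h
  · calc _ ≤ (y - 1) ^ 2 / (y + 1) := bernsteinIntegrand_log_le h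
      _ ≤ (y - 1) ^ 2 := div_le_self (sq_nonneg _) (by linarith)
  · calc _ ≤ (1 - y) ^ 2 / (y * (1 + y)) := bernsteinIntegrand_log_le_of_le_one (by linarith) h
      _ ≤ (1 - y) ^ 2 := div_le_self (sq_nonneg _) (by nlinarith)
      _ = (y - 1) ^ 2 := by ring

theorem quadratic_nonneg_of_sq_le_mul {a b c s M : ℝ} (ha : 0 ≤ a) (hc : 0 ≤ c) (hM : 0 ≤ M)
    (hs : s ^ 2 ≤ a * c) (hb : 0 ≤ b + 2 * s) : 0 ≤ a * M ^ 2 + b * M + c := by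
  rcases ha.eq_or_lt with rfl | ha
  · have : s = 0 := pow_eq_zero_iff two_ne_zero |>.1 (le_antisymm (by simpa using hs) (sq_nonneg s))
    subst this
    nlinarith
  · refine nonneg_of_mul_nonneg_right ?_ ha
    nlinarith [sq_nonneg (a * M - s), mul_nonneg (mul_nonneg ha.le hM) hb]

theorem bernsteinIntegrand_log_add_le {y M : ℝ} (hy₀ : 0 < y) (hy : y ≤ 4 / 5) (hM : 0 < M) :
    bernsteinIntegrand (log y) + (1 + M) / 25 ≤
      (1 + M) * (y - 1) ^ 2 + (1 + M) / (25 * M) * (y ^ 2)⁻¹ := by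
  have hφ := bernsteinIntegrand_log_le_of_le_one hy₀ (by linarith)
  set X := 25 * (1 - y) ^ 2 - 1 with hX_def
  have hX : 0 ≤ X := by nlinarith
  set b := y ^ 2 * X + 1 - 25 * y * (1 - y) ^ 2 / (1 + y) with hb_def
  -- multiplied by `25 M y²`, the claim with `φ` replaced by the bound `hφ`
  suffices hQ : 0 ≤ y ^ 2 * X * M ^ 2 + b * M + 1 by
    have key : (1 + M) * (y - 1) ^ 2 + (1 + M) / (25 * M) * (y ^ 2)⁻¹ -
        ((1 - y) ^ 2 / (y * (1 + y)) + (1 + M) / 25) =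
          (y ^ 2 * X * M ^ 2 + b * M + 1) / (25 * M * y ^ 2) := by
      rw [hb_def, hX_def]
      field_simp
      ring
    have := div_nonneg hQ (by positivity : (0 : ℝ) ≤ 25 * M * y ^ 2)
    linarith
  -- `y X / (5 (1 - y))` is a rational lower bound for `y √X`, as `X ≤ 25 (1 - y)²`
  refine quadratic_nonneg_of_sq_le_mul (s := y * X / (5 * (1 - y))) (by positivity) zero_le_one
    hM.le ?_ ?_
  · rw [div_pow, div_le_iff₀ (by nlinarith)]
    nlinarith [mul_nonneg (sq_nonneg y) hX]
  · have hP : 0 ≤ 5 - 77*y + 438*y^2 - 675*y^3 + 180*y^4 + 250*y^5 - 125*y^6 := by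
      have h := mul_nonneg hy₀.le (sub_nonneg.2 hy)
      nlinarith [sq_nonneg (y - 3/25), mul_nonneg h (sq_nonneg (y - 3/25)), mul_nonneg h h,
        mul_nonneg (mul_nonneg h h) hy₀.le]
    have h₁ : (1 : ℝ) - y ≠ 0 := by linarith
    have h₂ : (1 : ℝ) + y ≠ 0 := by linarith
    have : b + 2 * (y * X / (5 * (1 - y))) =
        (5 - 77*y + 438*y^2 - 675*y^3 + 180*y^4 + 250*y^5 - 125*y^6) / (5 * (1 - y) * (1 + y)) := by
      rw [hb_def, hX_def]
      field_simp
      ring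
    rw [this]
    exact div_nonneg hP (by nlinarith)

theorem bernsteinIntegrand_half_log {r : ℝ} (hr : 0 ≤ r) :
    bernsteinIntegrand (1 / 2 * log r) = bernsteinIntegrand (log √r) := by
  rw [Real.log_sqrt hr]
  ring_nf

theorem bernsteinIntegrand_half_log_le_sq {r : ℝ} (hr : 0 < r) (h : r⁻¹ ≤ 25 / 16) :
    bernsteinIntegrand (1 / 2 * log r) ≤ (√r - 1) ^ 2 := by
  rw [bernsteinIntegrand_half_log hr.le]
  refine bernsteinIntegrand_log_le_sq (Real.le_sqrt_of_sq_le ?_)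
  rw [inv_le_comm₀ hr (by norm_num)] at h
  linarith

theorem bernsteinIntegrand_half_log_add_le {r M : ℝ} (hr : 0 < r) (h : 25 / 16 ≤ r⁻¹)
    (hM : 0 < M) :
    bernsteinIntegrand (1 / 2 * log r) + (1 + M) / 25 ≤
      (1 + M) * (√r - 1) ^ 2 + (1 + M) / (25 * M) * r⁻¹ := by
  rw [bernsteinIntegrand_half_log hr.le]
  rw [le_inv_comm₀ (by norm_num) hr] at h
  have hy : √r ≤ 4 / 5 := (Real.sqrt_le_left (by norm_num)).2 (by linarith)
  simpa only [Real.sq_sqrt hr.le] using bernsteinIntegrand_log_add_le (Real.sqrt_pos.2 hr) hy hM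

theorem mul_sqrt_div_sub_one_sq_le (d θ : ℝ) : θ * (√(d / θ) - 1) ^ 2 ≤ (√d - √θ) ^ 2 := by
  rcases le_or_gt θ 0 with hθ | hθ
  · exact (mul_nonpos_of_nonpos_of_nonneg hθ (sq_nonneg _)).trans (sq_nonneg _)
  · have hs : 0 < √θ := Real.sqrt_pos.2 hθ
    refine le_of_eq ?_
    rw [Real.sqrt_div' _ hθ.le]
    nth_rw 1 [← Real.sq_sqrt hθ.le]
    field_simp

section Integrals

variable {X : Type*} [MeasurableSpace X]

theorem lintegral_le_lintegral_of_add_mul_le {ν : Measure X} [IsFiniteMeasure ν]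
    {f g h : X → ℝ≥0∞} {κ m : ℝ≥0∞} (hκ : κ ≠ ∞) (hm : m ≠ ∞) (hh : AEMeasurable h ν)
    (hfgh : ∀ᵐ x ∂ν, f x + κ * m ≤ g x + κ * h x) (hhm : ∫⁻ x, h x ∂ν ≤ m * ν Set.univ) :
    ∫⁻ x, f x ∂ν ≤ ∫⁻ x, g x ∂ν := by
  refine (ENNReal.add_le_add_iff_right
    (mul_ne_top hκ (mul_ne_top hm (measure_ne_top ν Set.univ)))).1 ?_
  calc ∫⁻ x, f x ∂ν + κ * (m * ν Set.univ) = ∫⁻ x, f x + κ * m ∂ν := by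
        rw [lintegral_add_right _ measurable_const, lintegral_const, mul_assoc]
    _ ≤ ∫⁻ x, g x + κ * h x ∂ν := lintegral_mono_ae hfgh
    _ = ∫⁻ x, g x ∂ν + κ * ∫⁻ x, h x ∂ν := by
        rw [lintegral_add_right' _ (hh.const_mul κ), lintegral_const_mul'' κ hh]
    _ ≤ ∫⁻ x, g x ∂ν + κ * (m * ν Set.univ) := by gcongr

variable {ν : Measure X} [IsFiniteMeasure ν] {r : X → ℝ} {M : ℝ}

theorem setLIntegral_bernsteinIntegrand_le (hr : Measurable r) (hr₀ : ∀ᵐ x ∂ν, 0 < r x)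
    (hM : 0 ≤ M)
    (htail : ∫⁻ x in {x | 25 / 16 ≤ (r x)⁻¹}, ENNReal.ofReal (r x)⁻¹ ∂ν ≤
      ENNReal.ofReal M * ν {x | 25 / 16 ≤ (r x)⁻¹}) :
    ∫⁻ x in {x | 25 / 16 ≤ (r x)⁻¹}, ENNReal.ofReal (bernsteinIntegrand (1 / 2 * log (r x))) ∂ν ≤
      ENNReal.ofReal (1 + M) *
        ∫⁻ x in {x | 25 / 16 ≤ (r x)⁻¹}, ENNReal.ofReal ((√(r x) - 1) ^ 2) ∂ν := by
  set A := {x | 25 / 16 ≤ (r x)⁻¹}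
  have hA : MeasurableSet A := measurableSet_le measurable_const hr.inv
  rcases hM.eq_or_lt with rfl | hM
  · have hνA : ENNReal.ofReal (25 / 16) * ν A = 0 := by
      refine le_antisymm ?_ zero_le
      calc ENNReal.ofReal (25 / 16) * ν A = ∫⁻ _ in A, ENNReal.ofReal (25 / 16) ∂ν :=
            (setLIntegral_const A _).symm
        _ ≤ ∫⁻ x in A, ENNReal.ofReal (r x)⁻¹ ∂ν :=
            setLIntegral_mono hr.inv.ennreal_ofReal fun x hx => ENNReal.ofReal_le_ofReal hx
        _ ≤ 0 := by simpa using htail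
    simp [Measure.restrict_eq_zero.2 ((mul_eq_zero.1 hνA).resolve_left (by norm_num))]
  rw [← lintegral_const_mul' _ _ ofReal_ne_top]
  refine lintegral_le_lintegral_of_add_mul_le (κ := ENNReal.ofReal ((1 + M) / (25 * M)))
    (h := fun x => ENNReal.ofReal (r x)⁻¹) ofReal_ne_top ofReal_ne_top
    hr.inv.ennreal_ofReal.aemeasurable ?_
    (by rwa [Measure.restrict_apply_univ])
  filter_upwards [ae_restrict_of_ae hr₀, ae_restrict_mem hA] with x hx hxA
  have hκ : 0 ≤ (1 + M) / (25 * M) := by positivity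
  rw [← ENNReal.ofReal_mul hκ, ← ENNReal.ofReal_mul (by positivity), ← ENNReal.ofReal_mul hκ,
    ← ENNReal.ofReal_add (bernsteinIntegrand_nonneg _) (by positivity),
    ← ENNReal.ofReal_add (by positivity) (mul_nonneg hκ (inv_nonneg.2 hx.le))]
  refine ENNReal.ofReal_le_ofReal ?_
  convert bernsteinIntegrand_half_log_add_le hx hxA hM using 2
  field_simp

theorem lintegral_bernsteinIntegrand_le (hr : Measurable r) (hr₀ : ∀ᵐ x ∂ν, 0 < r x)
    (hM : 0 ≤ M)
    (htail : ∫⁻ x in {x | 25 / 16 ≤ (r x)⁻¹}, ENNReal.ofReal (r x)⁻¹ ∂ν ≤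
      ENNReal.ofReal M * ν {x | 25 / 16 ≤ (r x)⁻¹}) :
    ∫⁻ x, ENNReal.ofReal (bernsteinIntegrand (1 / 2 * log (r x))) ∂ν ≤
      ENNReal.ofReal (1 + M) * ∫⁻ x, ENNReal.ofReal ((√(r x) - 1) ^ 2) ∂ν := by
  have hA : MeasurableSet {x | 25 / 16 ≤ (r x)⁻¹} := measurableSet_le measurable_const hr.inv
  rw [← lintegral_add_compl (fun x => ENNReal.ofReal (bernsteinIntegrand (1 / 2 * log (r x)))) hA,
    ← lintegral_add_compl (fun x => ENNReal.ofReal ((√(r x) - 1) ^ 2)) hA, mul_add]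
  gcongr ?_ + ?_
  · exact setLIntegral_bernsteinIntegrand_le hr hr₀ hM htail
  · calc _ ≤ ∫⁻ x in {x | 25 / 16 ≤ (r x)⁻¹}ᶜ, ENNReal.ofReal ((√(r x) - 1) ^ 2) ∂ν := by
          refine lintegral_mono_ae ?_
          filter_upwards [ae_restrict_of_ae hr₀, ae_restrict_mem hA.compl] with x hx hxA
          exact ENNReal.ofReal_le_ofReal
            (bernsteinIntegrand_half_log_le_sq hx (le_of_not_ge hxA))
      _ ≤ _ := le_mul_of_one_le_left' (ENNReal.one_le_ofReal.2 (by linarith))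

theorem lintegral_withDensity_le_lintegral_mul_add_withDensity {μ : Measure X} {p q w : X → ℝ}
    (hp : Measurable p) (hq : Measurable q) (hq₀ : ∀ x, 0 ≤ q x) (hw : Measurable w)
    (hpqw : ∀ x, 0 < p x + q x → w x = p x / (p x + q x)) {f : X → ℝ≥0∞} (hf : Measurable f) :
    ∫⁻ x, f x ∂μ.withDensity (fun x => ENNReal.ofReal (p x)) ≤
      ∫⁻ x, ENNReal.ofReal (w x) * f x
        ∂(μ.withDensity (fun x => ENNReal.ofReal (p x)) +
          μ.withDensity (fun x => ENNReal.ofReal (q x))) := by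
  have hwf : Measurable fun x => ENNReal.ofReal (w x) * f x := hw.ennreal_ofReal.mul hf
  rw [lintegral_add_measure, lintegral_withDensity_eq_lintegral_mul _ hp.ennreal_ofReal hf,
    lintegral_withDensity_eq_lintegral_mul _ hp.ennreal_ofReal hwf,
    lintegral_withDensity_eq_lintegral_mul _ hq.ennreal_ofReal hwf,
    ← lintegral_add_left (hp.ennreal_ofReal.mul hwf)]
  refine lintegral_mono fun x => ?_
  simp only [Pi.mul_apply]
  rcases le_or_gt (p x) 0 with hpx | hpx
  · simp [ENNReal.ofReal_eq_zero.2 hpx]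
  · have hs : 0 < p x + q x := by linarith [hq₀ x]
    have hpqw' : (ENNReal.ofReal (p x) + ENNReal.ofReal (q x)) * ENNReal.ofReal (w x) =
        ENNReal.ofReal (p x) := by
      rw [← ENNReal.ofReal_add hpx.le (hq₀ x), ← ENNReal.ofReal_mul hs.le, hpqw x hs,
        mul_div_cancel₀ _ hs.ne']
    refine le_of_eq ?_
    calc ENNReal.ofReal (p x) * f x
        = (ENNReal.ofReal (p x) + ENNReal.ofReal (q x)) * ENNReal.ofReal (w x) * f x := by
          rw [hpqw']
      _ = _ := by ring

end Integrals

theorem bernstein_norm_half_log_discriminator_ratio_le_general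
    {X : Type*} [MeasurableSpace X] (μ : Measure X)
    (p₀ pθ : X → ℝ) (hp₀ : Measurable p₀) (hpθ : Measurable pθ)
    (hpθnn : ∀ x, 0 ≤ pθ x)
    (hp₀den : ∫⁻ x, ENNReal.ofReal (p₀ x) ∂μ = 1)
    (P₀ Pθ : Measure X)
    (hP₀ : P₀ = μ.withDensity fun x => ENNReal.ofReal (p₀ x))
    (hPθ : Pθ = μ.withDensity fun x => ENNReal.ofReal (pθ x))
    (Dθ : X → ℝ) (hDθ : Measurable Dθ)
    (hDθ_def : ∀ x, 0 < p₀ x + pθ x → Dθ x = p₀ x / (p₀ x + pθ x))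
    (D : X → ℝ) (hD : Measurable D) (hD_mem : ∀ x, 0 < D x ∧ D x < 1)
    (M : ℝ) (hM : 0 ≤ M)
    (htail :
      (∫⁻ x in {x | 25 / 16 ≤ Dθ x / D x}, ENNReal.ofReal (Dθ x / D x) ∂P₀) ≤
        ENNReal.ofReal M * P₀ {x | 25 / 16 ≤ Dθ x / D x}) :
    2 * ∫⁻ x, ENNReal.ofReal
          (Real.exp |1 / 2 * Real.log (D x / Dθ x)| - 1 -
            |1 / 2 * Real.log (D x / Dθ x)|) ∂P₀ ≤
      ENNReal.ofReal (2 * (1 + M)) *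
        ∫⁻ x, ENNReal.ofReal ((Real.sqrt (D x) - Real.sqrt (Dθ x)) ^ 2) ∂(P₀ + Pθ) := by
  have : IsFiniteMeasure P₀ := hP₀ ▸ isFiniteMeasure_withDensity (hp₀den ▸ one_ne_top)
  have hDθ_pos : ∀ᵐ x ∂P₀, 0 < Dθ x := by
    rw [hP₀, ae_withDensity_iff hp₀.ennreal_ofReal]
    refine ae_of_all _ fun x hx => ?_
    have hp : 0 < p₀ x := ENNReal.ofReal_pos.1 (pos_iff_ne_zero.2 hx)
    have hs : 0 < p₀ x + pθ x := by linarith [hpθnn x]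
    rw [hDθ_def x hs]
    positivity
  have hr₀ : ∀ᵐ x ∂P₀, 0 < D x / Dθ x := hDθ_pos.mono fun x hx => div_pos (hD_mem x).1 hx
  calc 2 * ∫⁻ x, ENNReal.ofReal (bernsteinIntegrand (1 / 2 * log (D x / Dθ x))) ∂P₀
      ≤ 2 * (ENNReal.ofReal (1 + M) * ∫⁻ x, ENNReal.ofReal ((√(D x / Dθ x) - 1) ^ 2) ∂P₀) := by
        gcongr 2 * ?_
        exact lintegral_bernsteinIntegrand_le (hD.div hDθ) hr₀ hM
          (by simpa only [inv_div] using htail)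
    _ ≤ 2 * (ENNReal.ofReal (1 + M) * ∫⁻ x, ENNReal.ofReal (Dθ x) *
          ENNReal.ofReal ((√(D x / Dθ x) - 1) ^ 2) ∂(P₀ + Pθ)) := by
        gcongr 2 * (_ * ?_)
        rw [hP₀, hPθ]
        exact lintegral_withDensity_le_lintegral_mul_add_withDensity hp₀ hpθ hpθnn hDθ hDθ_def
          (by fun_prop)
    _ ≤ 2 * (ENNReal.ofReal (1 + M) *
          ∫⁻ x, ENNReal.ofReal ((√(D x) - √(Dθ x)) ^ 2) ∂(P₀ + Pθ)) := by
        gcongr with x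
        rw [← ENNReal.ofReal_mul' (sq_nonneg _)]
        exact ENNReal.ofReal_le_ofReal (mul_sqrt_div_sub_one_sq_le _ _)
    _ = _ := by rw [ENNReal.ofReal_mul zero_le_two, ENNReal.ofReal_ofNat, mul_assoc]

/-- Under the tail condition on `D_θ/D`, the Bernstein-norm bound
`‖(1/2) log(D/D_θ)‖²_{P₀,B} ≤ 2(1 + M) h_θ(D, D_θ)²` holds. -/
theorem bernstein_norm_half_log_discriminator_ratio_le
    {X : Type*} [MeasurableSpace X] (μ : Measure X) [SigmaFinite μ]
    (p₀ pθ : X → ℝ) (hp₀ : Measurable p₀) (hpθ : Measurable pθ)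
    (hp₀nn : ∀ x, 0 ≤ p₀ x) (hpθnn : ∀ x, 0 ≤ pθ x)
    (hp₀den : ∫⁻ x, ENNReal.ofReal (p₀ x) ∂μ = 1)
    (hpθden : ∫⁻ x, ENNReal.ofReal (pθ x) ∂μ = 1)
    (P₀ Pθ : Measure X)
    (hP₀ : P₀ = μ.withDensity fun x => ENNReal.ofReal (p₀ x))
    (hPθ : Pθ = μ.withDensity fun x => ENNReal.ofReal (pθ x))
    (Dθ : X → ℝ) (hDθ : Measurable Dθ)
    (hDθ_def : ∀ x, 0 < p₀ x + pθ x → Dθ x = p₀ x / (p₀ x + pθ x))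
    (D : X → ℝ) (hD : Measurable D) (hD_mem : ∀ x, 0 < D x ∧ D x < 1)
    (M : ℝ) (hM : 0 ≤ M)
    (htail :
      (∫⁻ x in {x | 25 / 16 ≤ Dθ x / D x}, ENNReal.ofReal (Dθ x / D x) ∂P₀) ≤
        ENNReal.ofReal M * P₀ {x | 25 / 16 ≤ Dθ x / D x}) :
    2 * ∫⁻ x, ENNReal.ofReal
          (Real.exp |1 / 2 * Real.log (D x / Dθ x)| - 1 -
            |1 / 2 * Real.log (D x / Dθ x)|) ∂P₀ ≤
      ENNReal.ofReal (2 * (1 + M)) *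
        ∫⁻ x, ENNReal.ofReal ((Real.sqrt (D x) - Real.sqrt (Dθ x)) ^ 2) ∂(P₀ + Pθ) :=
  bernstein_norm_half_log_discriminator_ratio_le_general μ p₀ pθ hp₀ hpθ hpθnn hp₀den P₀ Pθ hP₀ hPθ
    Dθ hDθ hDθ_def D hD hD_mem M hM htail
end
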